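/- arXiv:2603.29978 — 7 statements merged into one kernel-verified Lean document; each statement's English description precedes it below -/
import Mathlib

section
/- For every integer n ≥ 3, the f-vector (1, f_0, f_1, f_2) of the van der Waerden complex vdw(n,2) satisfies f_1(vdw(n,2)) ≥ f_2(vdw(n,2)); that is, the number of one-dimensional faces of vdw(n,2) is at least the number of two-dimensional faces. -/
open MvPolynomial

/-- `F` is a facet of the van der Waerden complex `vdw(n,k)`: an arithmetic
progression `{i, i+a, …, i+k*a} ⊆ {1,…,n}` with `i ≥ 1`, `a ≥ 1`. -/
def vdwFacet (n k : ℕ) (F : Finset ℕ) : Prop :=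
  ∃ i a : ℕ, 1 ≤ i ∧ 1 ≤ a ∧ i + k * a ≤ n ∧
    F = (Finset.range (k + 1)).image (fun j => i + j * a)

/-- `F` is a face of `vdw(n,k)`: a nonempty subset of a facet. -/
def vdwFace (n k : ℕ) (F : Finset ℕ) : Prop :=
  F.Nonempty ∧ ∃ G : Finset ℕ, vdwFacet n k G ∧ F ⊆ G

/-- `f_i(vdw(n,k))`: the number of `i`-dimensional faces (faces with `i+1` elements). -/
noncomputable def vdwF (n k i : ℕ) : ℕ :=
  Set.ncard {F : Finset ℕ | vdwFace n k F ∧ F.card = i + 1}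

/-- The defining ideal of `A(vdw(n,k))`: the Stanley–Reisner ideal of `vdw(n,k)`
together with the squares of the variables.  Variable `j : Fin n` corresponds to
`x_{j+1}`. -/
noncomputable def vdwIdeal (K : Type*) [Field K] (n k : ℕ) :
    Ideal (MvPolynomial (Fin n) K) :=
  Ideal.span
    ({m | ∃ S : Finset (Fin n), S.Nonempty ∧
        ¬ vdwFace n k (S.image (fun j : Fin n => (j : ℕ) + 1)) ∧ m = ∏ j ∈ S, X j} ∪
      {m | ∃ j : Fin n, m = X j ^ 2})

/-- The Artinian ring `A(vdw(n,k)) = K[x_1,…,x_n]/(I_{vdw(n,k)} + ⟨x_1²,…,x_n²⟩)`. -/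
abbrev vdwA (K : Type*) [Field K] (n k : ℕ) :=
  MvPolynomial (Fin n) K ⧸ vdwIdeal K n k

/-- The degree-`i` graded piece of `A(vdw(n,k))`: the image in the quotient of the
homogeneous polynomials of degree `i`. -/
noncomputable def vdwPiece (K : Type*) [Field K] (n k i : ℕ) :
    Submodule K (vdwA K n k) :=
  Submodule.map (Ideal.Quotient.mkₐ K (vdwIdeal K n k)).toLinearMap
    (MvPolynomial.homogeneousSubmodule (Fin n) K i)

/-- The class of the linear form `ℓ = x_1 + ⋯ + x_n` in `A(vdw(n,k))`. -/
noncomputable def vdwEll (K : Type*) [Field K] (n k : ℕ) : vdwA K n k :=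
  Ideal.Quotient.mk (vdwIdeal K n k) (∑ j : Fin n, X j)

/-- The multiplication map `×u : A(vdw(n,k))_i → A(vdw(n,k))_j` has maximal rank:
the dimension of the image of the degree-`i` piece under multiplication by `u`
equals the minimum of the dimensions of the degree-`i` and degree-`j` pieces. -/
def vdwMaxRank (K : Type*) [Field K] (n k : ℕ) (u : vdwA K n k) (i j : ℕ) : Prop :=
  Module.finrank K ↥(Submodule.map (LinearMap.mulLeft K u) (vdwPiece K n k i)) =
    min (Module.finrank K ↥(vdwPiece K n k i)) (Module.finrank K ↥(vdwPiece K n k j))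

/-- `A(vdw(n,k))` has the Weak Lefschetz Property: there is a linear form `ℓ`
such that `×ℓ : A_i → A_{i+1}` has maximal rank for all `i ≥ 0`. -/
def vdwWLP (K : Type*) [Field K] (n k : ℕ) : Prop :=
  ∃ ℓ : MvPolynomial (Fin n) K, ℓ.IsHomogeneous 1 ∧
    ∀ i : ℕ, vdwMaxRank K n k (Ideal.Quotient.mk (vdwIdeal K n k) ℓ) i (i + 1)
/-- The van der Waerden complex `vdw(n,k)` is a pseudo-manifold: all facets have
`k+1` elements, every face with `k` elements lies in at most two facets, and any
two facets are connected by a chain of facets whose consecutive intersections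
have `k` elements. -/
def vdwIsPseudoManifold (n k : ℕ) : Prop :=
  (∀ F : Finset ℕ, vdwFacet n k F → F.card = k + 1) ∧
  (∀ S : Finset ℕ, vdwFace n k S → S.card = k →
    Set.ncard {F : Finset ℕ | vdwFacet n k F ∧ S ⊆ F} ≤ 2) ∧
  (∀ F F' : Finset ℕ, vdwFacet n k F → vdwFacet n k F' →
    ∃ m : ℕ, ∃ G : ℕ → Finset ℕ, G 0 = F ∧ G m = F' ∧
      (∀ j ≤ m, vdwFacet n k (G j)) ∧
      (∀ j < m, (G j ∩ G (j + 1)).card = k))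

/-- The pseudo-manifold `vdw(n,k)` has a boundary: some face with `k` elements
lies in exactly one facet. -/
def vdwHasBoundary (n k : ℕ) : Prop :=
  ∃ S : Finset ℕ, vdwFace n k S ∧ S.card = k ∧
    Set.ncard {F : Finset ℕ | vdwFacet n k F ∧ S ⊆ F} = 1

/-- For a positive integer `m = 2^{ν₂(m)}·t` with `t` odd,
`vval m = (−1)^{ν₂(m)+1}·2^{ν₂(m)}`. -/
def vval (m : ℕ) : ℤ :=
  (-1) ^ (padicValNat 2 m + 1) * 2 ^ (padicValNat 2 m)

lemma facet2_eq {n : ℕ} {F : Finset ℕ} (h : vdwFacet n 2 F) :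
    ∃ i a : ℕ, 1 ≤ i ∧ 1 ≤ a ∧ i + 2 * a ≤ n ∧ F = {i, i + a, i + 2 * a} := by
  obtain ⟨i, a, hi, ha, hle, hF⟩ := h
  refine ⟨i, a, hi, ha, hle, ?_⟩
  rw [hF]
  ext x
  simp [Finset.mem_image, Finset.mem_range, Finset.mem_insert]
  constructor
  · rintro ⟨j, hj, rfl⟩
    interval_cases j <;> simp <;> omega
  · rintro (rfl | rfl | rfl)
    exacts [⟨0, by omega, by ring⟩, ⟨1, by omega, by ring⟩, ⟨2, by omega, by ring⟩]

lemma face3_eq {n : ℕ} {F : Finset ℕ} (h : vdwFace n 2 F) (hc : F.card = 3) :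
    ∃ i a : ℕ, 1 ≤ i ∧ 1 ≤ a ∧ i + 2 * a ≤ n ∧ F = {i, i + a, i + 2 * a} := by
  obtain ⟨hne, G, hG, hsub⟩ := h
  obtain ⟨i, a, hi, ha, hle, rfl⟩ := facet2_eq hG
  have hGc : ({i, i + a, i + 2 * a} : Finset ℕ).card ≤ 3 := by
    apply le_trans (Finset.card_insert_le _ _)
    simp [Finset.card_insert_le]
    have := Finset.card_insert_le (i+a) ({i+2*a} : Finset ℕ)
    simp at this; omega
  have : F = {i, i + a, i + 2 * a} :=
    Finset.eq_of_subset_of_card_le hsub (by omega)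
  exact ⟨i, a, hi, ha, hle, this⟩

/-- For every integer `n ≥ 3`, the `f`-vector of `vdw(n,2)`
satisfies `f_1 ≥ f_2`: there are at least as many one-dimensional faces as
two-dimensional faces. -/
theorem vdw_f_vector_k_eq_two (n : ℕ) (hn : 3 ≤ n) : vdwF n 2 2 ≤ vdwF n 2 1 := by
  unfold vdwF
  have hfin : {F : Finset ℕ | vdwFace n 2 F ∧ F.card = 1 + 1}.Finite := by
    apply Set.Finite.subset (Finset.range (n + 1)).powerset.finite_toSet
    rintro F ⟨⟨hne, G, ⟨i, a, hi, ha, hle, rfl⟩, hsub⟩, hc⟩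
    simp only [Finset.coe_powerset, Set.mem_preimage, Set.mem_powerset_iff]
    intro x hx
    have := hsub hx
    simp [Finset.mem_image, Finset.mem_range] at this
    obtain ⟨j, hj, rfl⟩ := this
    simp [Finset.mem_range]
    have : j * a ≤ 2 * a := Nat.mul_le_mul_right a (by omega)
    omega
  apply Set.ncard_le_ncard_of_injOn (fun F => F.filter (fun x => 3 * x ≠ F.sum id))
    (ht := hfin)
  · rintro F ⟨hface, hcard⟩
    obtain ⟨i, a, hi, ha, hle, rfl⟩ := face3_eq hface hcard
    have hsum : ({i, i + a, i + 2 * a} : Finset ℕ).sum id = 3 * i + 3 * a := by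
      rw [Finset.sum_insert (by simp; omega), Finset.sum_insert (by simp; omega),
        Finset.sum_singleton]
      simp; ring
    have hfil : ({i, i + a, i + 2 * a} : Finset ℕ).filter
        (fun x => 3 * x ≠ ({i, i + a, i + 2 * a} : Finset ℕ).sum id) = {i, i + 2 * a} := by
      rw [hsum]; ext x
      simp [Finset.mem_filter, Finset.mem_insert]
      omega
    simp only [hfil]
    constructor
    · exact ⟨⟨i, by simp⟩, {i, i + a, i + 2 * a}, ⟨i, a, hi, ha, by omega, by
        ext x
        simp [Finset.mem_image, Finset.mem_range, Finset.mem_insert]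
        constructor
        · rintro (rfl | rfl | rfl)
          exacts [⟨0, by omega, by ring⟩, ⟨1, by omega, by ring⟩, ⟨2, by omega, by ring⟩]
        · rintro ⟨j, hj, rfl⟩
          interval_cases j <;> simp <;> omega⟩,
        by intro x hx; simp at hx ⊢; omega⟩
    · rw [Finset.card_insert_of_notMem (by simp; omega), Finset.card_singleton]
  · rintro F ⟨hF, hFc⟩ G ⟨hG, hGc⟩ heq
    obtain ⟨i, a, hi, ha, hle, rfl⟩ := face3_eq hF hFc
    obtain ⟨i', a', hi', ha', hle', rfl⟩ := face3_eq hG hGc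
    have hsum : ({i, i + a, i + 2 * a} : Finset ℕ).sum id = 3 * i + 3 * a := by
      rw [Finset.sum_insert (by simp; omega), Finset.sum_insert (by simp; omega),
        Finset.sum_singleton]
      simp; ring
    have hsum' : ({i', i' + a', i' + 2 * a'} : Finset ℕ).sum id = 3 * i' + 3 * a' := by
      rw [Finset.sum_insert (by simp; omega), Finset.sum_insert (by simp; omega),
        Finset.sum_singleton]
      simp; ring
    simp only at heq
    rw [hsum, hsum'] at heq
    have h1 : ({i, i + a, i + 2 * a} : Finset ℕ).filter (fun x => 3 * x ≠ 3 * i + 3 * a)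
        = {i, i + 2 * a} := by
      ext x; simp [Finset.mem_filter, Finset.mem_insert]; omega
    have h1' : ({i', i' + a', i' + 2 * a'} : Finset ℕ).filter (fun x => 3 * x ≠ 3 * i' + 3 * a')
        = {i', i' + 2 * a'} := by
      ext x; simp [Finset.mem_filter, Finset.mem_insert]; omega
    rw [h1, h1'] at heq
    have m1 : i ∈ ({i', i' + 2 * a'} : Finset ℕ) := by rw [← heq]; simp
    have m2 : i + 2 * a ∈ ({i', i' + 2 * a'} : Finset ℕ) := by rw [← heq]; simp
    have m3 : i' ∈ ({i, i + 2 * a} : Finset ℕ) := by rw [heq]; simp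
    simp [Finset.mem_insert] at m1 m2 m3
    have : i = i' ∧ a = a' := by omega
    rw [this.1, this.2]
end

section
/- For every integer n ≥ 8, the f-vector (1, n, f_1, f_2, f_3) of the van der Waerden complex vdw(n,3) satisfies f_1(vdw(n,3)) ≤ f_2(vdw(n,3)); that is, the number of one-dimensional faces of vdw(n,3) is at most the number of two-dimensional faces. -/
open MvPolynomial

def bEdge (x y : ℕ) : ℕ :=
  if (y - x) % 3 = 0 then y
  else if (y - x) % 2 = 0 then (if (y - x) / 2 < x then y else y + (y - x) / 2)
  else if 2 * (y - x) < x then y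
  else if (y - x) < x then y + (y - x)
  else y + 2 * (y - x)

lemma bEdge_ge (x y : ℕ) : y ≤ bEdge x y := by
  unfold bEdge; split_ifs <;> omega

/-- generic face constructor -/
lemma face_of_mem (n i a : ℕ) (hi : 1 ≤ i) (ha : 1 ≤ a) (hn : i + 3 * a ≤ n)
    (F : Finset ℕ) (hne : F.Nonempty)
    (hsub : F ⊆ (Finset.range 4).image (fun j => i + j * a)) :
    vdwFace n 3 F :=
  ⟨hne, _, ⟨i, a, hi, ha, hn, rfl⟩, hsub⟩

lemma pair_subset (i a j1 j2 x y : ℕ) (h1 : j1 ≤ 3) (h2 : j2 ≤ 3)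
    (hx : x = i + j1 * a) (hy : y = i + j2 * a) :
    ({x, y} : Finset ℕ) ⊆ (Finset.range 4).image (fun j => i + j * a) := by
  intro z hz
  simp only [Finset.mem_insert, Finset.mem_singleton] at hz
  rcases hz with rfl | rfl
  · exact Finset.mem_image.2 ⟨j1, Finset.mem_range.2 (by omega), hx.symm⟩
  · exact Finset.mem_image.2 ⟨j2, Finset.mem_range.2 (by omega), hy.symm⟩

lemma pair_face_of (n i a j1 j2 x y : ℕ) (hi : 1 ≤ i) (ha : 1 ≤ a)
    (hn : i + 3 * a ≤ n) (h1 : j1 ≤ 3) (h2 : j2 ≤ 3)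
    (hx : x = i + j1 * a) (hy : y = i + j2 * a) :
    vdwFace n 3 {x, y} :=
  face_of_mem n i a hi ha hn _ ⟨x, by simp⟩ (pair_subset i a j1 j2 x y h1 h2 hx hy)

/-- the key characterization -/
lemma pair_face_iff (n x y : ℕ) (hxy : x < y) :
    vdwFace n 3 {x, y} ↔ 1 ≤ x ∧ bEdge x y ≤ n := by
  constructor
  · rintro ⟨-, G, ⟨i, a, hi, ha, hn, rfl⟩, hsub⟩
    have hx : x ∈ (Finset.range 4).image (fun j => i + j * a) := hsub (by simp)
    have hy : y ∈ (Finset.range 4).image (fun j => i + j * a) := hsub (by simp)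
    rw [Finset.mem_image] at hx hy
    obtain ⟨j1, hj1, hx⟩ := hx
    obtain ⟨j2, hj2, hy⟩ := hy
    rw [Finset.mem_range] at hj1 hj2
    constructor
    · omega
    · unfold bEdge
      have ha3 : a ≥ 1 := ha
      interval_cases j1 <;> interval_cases j2 <;> split_ifs <;> omega
  · rintro ⟨hx, hb⟩
    unfold bEdge at hb
    set d := y - x with hd
    split_ifs at hb with h3 h2 hc h2d hdx
    · -- 3 ∣ d : i = x, a = d/3, positions 0,3
      exact pair_face_of n x (d / 3) 0 3 x y hx (by omega) (by omega) (by omega) (by omega)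
        (by omega) (by omega)
    · -- even, x > d/2 : i = x - d/2, a = d/2, positions 1,3
      exact pair_face_of n (x - d / 2) (d / 2) 1 3 x y (by omega) (by omega) (by omega)
        (by omega) (by omega) (by omega) (by omega)
    · -- even, x ≤ d/2 : i = x, a = d/2, positions 0,2
      exact pair_face_of n x (d / 2) 0 2 x y hx (by omega) (by omega) (by omega) (by omega)
        (by omega) (by omega)
    · -- odd, x > 2d : i = x - 2d, a = d, positions 2,3
      exact pair_face_of n (x - 2 * d) d 2 3 x y (by omega) (by omega) (by omega) (by omega)
        (by omega) (by omega) (by omega)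
    · -- odd, d < x ≤ 2d : i = x - d, positions 1,2
      exact pair_face_of n (x - d) d 1 2 x y (by omega) (by omega) (by omega) (by omega)
        (by omega) (by omega) (by omega)
    · -- odd, x ≤ d : i = x, positions 0,1
      exact pair_face_of n x d 0 1 x y hx (by omega) (by omega) (by omega) (by omega)
        (by omega) (by omega)


lemma triple_face_of (n i a j1 j2 j3 p q r : ℕ) (hi : 1 ≤ i) (ha : 1 ≤ a)
    (hn : i + 3 * a ≤ n) (h1 : j1 ≤ 3) (h2 : j2 ≤ 3) (h3 : j3 ≤ 3)
    (hp : p = i + j1 * a) (hq : q = i + j2 * a) (hr : r = i + j3 * a) :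
    vdwFace n 3 {p, q, r} := by
  refine ⟨⟨p, by simp⟩, _, ⟨i, a, hi, ha, hn, rfl⟩, ?_⟩
  intro z hz
  simp only [Finset.mem_insert, Finset.mem_singleton] at hz
  rcases hz with rfl | rfl | rfl
  · exact Finset.mem_image.2 ⟨j1, Finset.mem_range.2 (by omega), hp.symm⟩
  · exact Finset.mem_image.2 ⟨j2, Finset.mem_range.2 (by omega), hq.symm⟩
  · exact Finset.mem_image.2 ⟨j3, Finset.mem_range.2 (by omega), hr.symm⟩

lemma card3 (p q r : ℕ) (h1 : p < q) (h2 : q < r) : ({p, q, r} : Finset ℕ).card = 3 := by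
  rw [Finset.card_insert_of_notMem (by simp; omega),
      Finset.card_insert_of_notMem (by simp; omega), Finset.card_singleton]


def tab (x y : ℕ) : Finset ℕ :=
  if x = 1 ∧ y = 2 then {1, 2, 3} else
  if x = 1 ∧ y = 3 then {1, 2, 4} else
  if x = 1 ∧ y = 4 then {1, 3, 4} else
  if x = 1 ∧ y = 5 then {1, 3, 5} else
  if x = 1 ∧ y = 7 then {1, 3, 7} else
  if x = 2 ∧ y = 3 then {1, 5, 7} else
  if x = 2 ∧ y = 4 then {2, 3, 4} else
  if x = 2 ∧ y = 5 then {2, 3, 5} else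
  if x = 2 ∧ y = 6 then {2, 4, 5} else
  if x = 2 ∧ y = 8 then {2, 4, 6} else
  if x = 3 ∧ y = 4 then {2, 4, 8} else
  if x = 3 ∧ y = 5 then {2, 6, 8} else
  if x = 3 ∧ y = 6 then {3, 4, 5} else
  if x = 3 ∧ y = 7 then {3, 4, 6} else
  if x = 4 ∧ y = 5 then {3, 5, 6} else
  if x = 4 ∧ y = 6 then {3, 5, 7} else
  if x = 4 ∧ y = 7 then {4, 5, 6} else
  if x = 4 ∧ y = 8 then {4, 5, 7} else
  if x = 5 ∧ y = 6 then {4, 6, 7} else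
  if x = 5 ∧ y = 7 then {4, 6, 8} else
  if x = 5 ∧ y = 8 then {5, 6, 7} else
  if x = 6 ∧ y = 7 then {5, 6, 8} else
  if x = 6 ∧ y = 8 then {5, 7, 8} else
  if x = 7 ∧ y = 8 then {6, 7, 8} else
  ∅

/-- decidable bounded version of being a face of vdw(8,3) -/
def isFace8 (F : Finset ℕ) : Prop :=
  F.Nonempty ∧ ∃ i ∈ Finset.Icc 1 8, ∃ a ∈ Finset.Icc 1 8,
    i + 3 * a ≤ 8 ∧ F ⊆ (Finset.range 4).image (fun j => i + j * a)

instance (F : Finset ℕ) : Decidable (isFace8 F) := by unfold isFace8; infer_instance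

lemma tab_inj : ∀ y1 ∈ Finset.range 9, ∀ x1 ∈ Finset.range y1, ∀ y2 ∈ Finset.range 9,
    ∀ x2 ∈ Finset.range y2, 1 ≤ x1 → bEdge x1 y1 ≤ 8 →
    1 ≤ x2 → bEdge x2 y2 ≤ 8 →
    tab x1 y1 = tab x2 y2 → x1 = x2 ∧ y1 = y2 := by decide

lemma tab_good : ∀ y ∈ Finset.range 9, ∀ x ∈ Finset.range y, 1 ≤ x → bEdge x y ≤ 8 →
    isFace8 (tab x y) ∧ (tab x y).card = 3 ∧ tab x y ⊆ Finset.Icc 1 8 := by decide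


def phiPair (x y : ℕ) : Finset ℕ :=
  if bEdge x y ≤ 8 then tab x y else
  if (y - x) % 3 = 0 then {x, x + (y - x) / 3, y}
  else if (y - x) % 2 = 0 then
    (if (y - x) / 2 < x then
       (if 3 * (y - x) < y then {y - 3 * (y - x), x, y}
        else if 4 * ((y - x) / 2) < y ∨ ((y - x) / 2) % 2 = 0 then {x, y - (y - x) / 2, y}
        else {y - 9 * ((4 * ((y - x) / 2) - y) / 8 + 1),
              y - 3 * ((4 * ((y - x) / 2) - y) / 8 + 1), y})
     else
       (if ((y - x) / 2) % 2 = 0 then {x, x + (y - x) / 2, y}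
        else {(y + (y - x) / 2) - 6 * ((4 * ((y - x) / 2) - (y + (y - x) / 2)) / 8 + 1),
              (y + (y - x) / 2) - 3 * ((4 * ((y - x) / 2) - (y + (y - x) / 2)) / 8 + 1),
              y + (y - x) / 2}))
  else if 2 * (y - x) < x then {y - 3 * (y - x), x, y}
  else {x, y, y + (y - x)}


lemma eq3 {p q r p' q' r' : ℕ} (h : ({p, q, r} : Finset ℕ) = {p', q', r'}) :
    (p = p' ∨ p = q' ∨ p = r') ∧ (q = p' ∨ q = q' ∨ q = r') ∧ (r = p' ∨ r = q' ∨ r = r') ∧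
    (p' = p ∨ p' = q ∨ p' = r) ∧ (q' = p ∨ q' = q ∨ q' = r) ∧ (r' = p ∨ r' = q ∨ r' = r) := by
  have h1 : p ∈ ({p', q', r'} : Finset ℕ) := h ▸ (by simp)
  have h2 : q ∈ ({p', q', r'} : Finset ℕ) := h ▸ (by simp)
  have h3 : r ∈ ({p', q', r'} : Finset ℕ) := h ▸ (by simp)
  have h4 : p' ∈ ({p, q, r} : Finset ℕ) := h ▸ (by simp)
  have h5 : q' ∈ ({p, q, r} : Finset ℕ) := h ▸ (by simp)
  have h6 : r' ∈ ({p, q, r} : Finset ℕ) := h ▸ (by simp)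
  simp only [Finset.mem_insert, Finset.mem_singleton] at h1 h2 h3 h4 h5 h6
  exact ⟨h1, h2, h3, h4, h5, h6⟩

set_option maxHeartbeats 1600000 in
lemma phi_descr (x y : ℕ) (hx : 1 ≤ x) (hxy : x < y) (h9 : 9 ≤ bEdge x y) :
    ((((y-x) % 3 = 0 ∧ 9 ≤ y) ∧ phiPair x y = {x, x + (y-x)/3, y}) ∨
     (((y-x) % 3 ≠ 0 ∧ 3*(y-x) < y ∧ ((y-x)/2 < x ∨ (y-x) % 2 = 1) ∧ 9 ≤ y) ∧
        phiPair x y = {y - 3*(y-x), x, y}) ∨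
     (((y-x) % 3 ≠ 0 ∧ (y-x) % 2 = 0 ∧ (y-x)/2 < x ∧ ¬ 3*(y-x) < y ∧
        (4*((y-x)/2) < y ∨ ((y-x)/2) % 2 = 0) ∧ 9 ≤ y) ∧ phiPair x y = {x, y - (y-x)/2, y}) ∨
     (((y-x) % 3 ≠ 0 ∧ (y-x) % 2 = 0 ∧ (y-x)/2 < x ∧ ¬ 3*(y-x) < y ∧ ¬ 4*((y-x)/2) < y ∧
        ((y-x)/2) % 2 = 1 ∧ 9 ≤ y) ∧
        phiPair x y = {y - 9*((4*((y-x)/2) - y)/8 + 1), y - 3*((4*((y-x)/2) - y)/8 + 1), y}) ∨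
     (((y-x) % 3 ≠ 0 ∧ (y-x) % 2 = 0 ∧ ¬ (y-x)/2 < x ∧ ((y-x)/2) % 2 = 0 ∧
        9 ≤ y + (y-x)/2) ∧ phiPair x y = {x, x + (y-x)/2, y}) ∨
     (((y-x) % 3 ≠ 0 ∧ (y-x) % 2 = 0 ∧ ¬ (y-x)/2 < x ∧ ((y-x)/2) % 2 = 1 ∧
        9 ≤ y + (y-x)/2) ∧
        phiPair x y = {(y + (y-x)/2) - 6*((4*((y-x)/2) - (y + (y-x)/2))/8 + 1),
          (y + (y-x)/2) - 3*((4*((y-x)/2) - (y + (y-x)/2))/8 + 1), y + (y-x)/2}) ∨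
     (((y-x) % 3 ≠ 0 ∧ (y-x) % 2 = 1 ∧ ¬ 2*(y-x) < x ∧ (y-x) < x ∧ 9 ≤ y + (y-x)) ∧
        phiPair x y = {x, y, y + (y-x)}) ∨
     (((y-x) % 3 ≠ 0 ∧ (y-x) % 2 = 1 ∧ ¬ (y-x) < x ∧ 9 ≤ y + 2*(y-x)) ∧
        phiPair x y = {x, y, y + (y-x)})) := by
  rw [phiPair, if_neg (by omega)]
  unfold bEdge at h9
  split_ifs at h9 ⊢ <;>
    first
      | exact Or.inl ⟨by omega, rfl⟩
      | exact Or.inr (Or.inl ⟨by omega, rfl⟩)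
      | exact Or.inr (Or.inr (Or.inl ⟨by omega, rfl⟩))
      | exact Or.inr (Or.inr (Or.inr (Or.inl ⟨by omega, rfl⟩)))
      | exact Or.inr (Or.inr (Or.inr (Or.inr (Or.inl ⟨by omega, rfl⟩))))
      | exact Or.inr (Or.inr (Or.inr (Or.inr (Or.inr (Or.inl ⟨by omega, rfl⟩)))))
      | exact Or.inr (Or.inr (Or.inr (Or.inr (Or.inr (Or.inr (Or.inl ⟨by omega, rfl⟩))))))
      | exact Or.inr (Or.inr (Or.inr (Or.inr (Or.inr (Or.inr (Or.inr ⟨by omega, rfl⟩))))))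

lemma eq3' {p q r p' q' r' : ℕ} (h : ({p, q, r} : Finset ℕ) = {p', q', r'})
    (o1 : p < q) (o2 : q < r) (o3 : p' < q') (o4 : q' < r') :
    p = p' ∧ q = q' ∧ r = r' := by
  have H := eq3 h
  omega

set_option maxHeartbeats 3200000 in
lemma phi_inj_big (x1 y1 x2 y2 : ℕ) (hx1 : 1 ≤ x1) (h1 : x1 < y1)
    (hx2 : 1 ≤ x2) (h2 : x2 < y2)
    (h91 : 9 ≤ bEdge x1 y1) (h92 : 9 ≤ bEdge x2 y2)
    (h : phiPair x1 y1 = phiPair x2 y2) : x1 = x2 ∧ y1 = y2 := by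
  rcases phi_descr x1 y1 hx1 h1 h91 with ⟨c1,e1⟩|⟨c1,e1⟩|⟨c1,e1⟩|⟨c1,e1⟩|⟨c1,e1⟩|⟨c1,e1⟩|⟨c1,e1⟩|⟨c1,e1⟩ <;>
  rcases phi_descr x2 y2 hx2 h2 h92 with ⟨c2,e2⟩|⟨c2,e2⟩|⟨c2,e2⟩|⟨c2,e2⟩|⟨c2,e2⟩|⟨c2,e2⟩|⟨c2,e2⟩|⟨c2,e2⟩ <;>
    · rw [e1, e2] at h
      have H := eq3' h (by omega) (by omega) (by omega) (by omega)
      omega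


lemma phiPair_low (x y : ℕ) (h : bEdge x y ≤ 8) : phiPair x y = tab x y := by
  rw [phiPair, if_pos h]


set_option maxHeartbeats 1600000 in
lemma phi_face_big (n x y : ℕ) (hx : 1 ≤ x) (hxy : x < y) (hb : bEdge x y ≤ n)
    (h9 : 9 ≤ bEdge x y) :
    vdwFace n 3 (phiPair x y) ∧ (phiPair x y).card = 3 := by
  rw [phiPair, if_neg (by omega)]
  unfold bEdge at hb h9
  split_ifs at hb h9 ⊢ with c1 c2 c3 c4 c5 c6 c7 c8
  · -- S1 : 3 ∣ d, triple {x, x+d/3, y}, i=x, a=d/3, (0,1,3)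
    exact ⟨triple_face_of n x ((y - x) / 3) 0 1 3 _ _ _ hx (by omega) (by omega)
      (by omega) (by omega) (by omega) (by omega) (by omega) (by omega),
      card3 _ _ _ (by omega) (by omega)⟩
  · -- S2 even : {y-3d, x, y}, i = y-3d, a = d, (0,2,3)
    exact ⟨triple_face_of n (y - 3 * (y - x)) (y - x) 0 2 3 _ _ _ (by omega) (by omega)
      (by omega) (by omega) (by omega) (by omega) (by omega) (by omega) (by omega),
      card3 _ _ _ (by omega) (by omega)⟩
  · -- S3 : {x, y-c, y}, i = y - 3c, a = c, (1,2,3)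
    exact ⟨triple_face_of n (y - 3 * ((y - x) / 2)) ((y - x) / 2) 1 2 3 _ _ _ (by omega)
      (by omega) (by omega) (by omega) (by omega) (by omega) (by omega) (by omega) (by omega),
      card3 _ _ _ (by omega) (by omega)⟩
  · -- S4 : {y-9s, y-3s, y}, i = y-9s, a = 3s, (0,2,3)
    exact ⟨triple_face_of n (y - 9 * ((4 * ((y - x) / 2) - y) / 8 + 1))
      (3 * ((4 * ((y - x) / 2) - y) / 8 + 1)) 0 2 3 _ _ _ (by omega) (by omega)
      (by omega) (by omega) (by omega) (by omega) (by omega) (by omega) (by omega),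
      card3 _ _ _ (by omega) (by omega)⟩
  · -- S7 : {x, x+c, y}, i = x, a = c, (0,1,2)
    exact ⟨triple_face_of n x ((y - x) / 2) 0 1 2 _ _ _ hx (by omega) (by omega)
      (by omega) (by omega) (by omega) (by omega) (by omega) (by omega),
      card3 _ _ _ (by omega) (by omega)⟩
  · -- S8 : {N-6s, N-3s, N}, N = y+c, i = N-9s, a = 3s, (1,2,3)
    exact ⟨triple_face_of n ((y + (y - x) / 2) - 9 * ((4 * ((y - x) / 2) - (y + (y - x) / 2)) / 8 + 1))
      (3 * ((4 * ((y - x) / 2) - (y + (y - x) / 2)) / 8 + 1)) 1 2 3 _ _ _ (by omega) (by omega)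
      (by omega) (by omega) (by omega) (by omega) (by omega) (by omega) (by omega),
      card3 _ _ _ (by omega) (by omega)⟩
  · -- S2 odd : {y-3d, x, y}, i = y-3d, a = d, (0,2,3)
    exact ⟨triple_face_of n (y - 3 * (y - x)) (y - x) 0 2 3 _ _ _ (by omega) (by omega)
      (by omega) (by omega) (by omega) (by omega) (by omega) (by omega) (by omega),
      card3 _ _ _ (by omega) (by omega)⟩
  · -- S5 : {x, y, y+d}, i = x-d, a = d, (1,2,3)
    exact ⟨triple_face_of n (x - (y - x)) (y - x) 1 2 3 _ _ _ (by omega) (by omega)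
      (by omega) (by omega) (by omega) (by omega) (by omega) (by omega) (by omega),
      card3 _ _ _ (by omega) (by omega)⟩
  · -- S6 : {x, y, y+d}, i = x, a = d, (0,1,2)
    exact ⟨triple_face_of n x (y - x) 0 1 2 _ _ _ hx (by omega) (by omega)
      (by omega) (by omega) (by omega) (by omega) (by omega) (by omega),
      card3 _ _ _ (by omega) (by omega)⟩

set_option maxHeartbeats 800000 in
lemma phi_ge9 (x y : ℕ) (hx : 1 ≤ x) (hxy : x < y) (h9 : 9 ≤ bEdge x y) :
    ∃ z ∈ phiPair x y, 9 ≤ z := by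
  rw [phiPair, if_neg (by omega)]
  unfold bEdge at h9
  split_ifs at h9 ⊢ <;>
    exact ⟨_, Finset.mem_insert.2 (Or.inr (Finset.mem_insert.2 (Or.inr
      (Finset.mem_singleton.2 rfl)))), by omega⟩


lemma face_subset_Icc (n k : ℕ) (F : Finset ℕ) (h : vdwFace n k F) :
    F ⊆ Finset.Icc 1 n := by
  obtain ⟨-, G, ⟨i, a, hi, ha, hn, rfl⟩, hsub⟩ := h
  intro z hz
  have := hsub hz
  rw [Finset.mem_image] at this
  obtain ⟨j, hj, rfl⟩ := this
  rw [Finset.mem_range] at hj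
  rw [Finset.mem_Icc]
  constructor
  · omega
  · have : j * a ≤ k * a := Nat.mul_le_mul_right a (by omega)
    omega

lemma faces_finite (n k c : ℕ) : {F : Finset ℕ | vdwFace n k F ∧ F.card = c}.Finite := by
  apply Set.Finite.subset ((Finset.Icc 1 n).powerset : Finset (Finset ℕ)).finite_toSet
  intro F hF
  simp only [Finset.coe_powerset, Set.mem_preimage, Set.mem_powerset_iff, Finset.coe_subset]
  exact face_subset_Icc n k F hF.1

lemma pair_min (x y : ℕ) (h : x < y) (hne : ({x, y} : Finset ℕ).Nonempty) :
    ({x, y} : Finset ℕ).min' hne = x := by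
  apply le_antisymm
  · exact Finset.min'_le _ x (by simp)
  · apply Finset.le_min'
    intro z hz
    simp only [Finset.mem_insert, Finset.mem_singleton] at hz
    omega

lemma pair_max (x y : ℕ) (h : x < y) (hne : ({x, y} : Finset ℕ).Nonempty) :
    ({x, y} : Finset ℕ).max' hne = y := by
  apply le_antisymm
  · apply Finset.max'_le
    intro z hz
    simp only [Finset.mem_insert, Finset.mem_singleton] at hz
    omega
  · exact Finset.le_max' _ y (by simp)

lemma card_two_repr (F : Finset ℕ) (h : F.card = 2) : ∃ x y, x < y ∧ F = {x, y} := by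
  obtain ⟨x, y, hne, rfl⟩ := Finset.card_eq_two.1 h
  rcases Nat.lt_or_ge x y with hlt | hge
  · exact ⟨x, y, hlt, rfl⟩
  · exact ⟨y, x, by omega, Finset.pair_comm x y⟩


noncomputable def PhiF (F : Finset ℕ) : Finset ℕ :=
  if h : F.Nonempty then phiPair (F.min' h) (F.max' h) else ∅

lemma isFace8_face (n : ℕ) (hn : 8 ≤ n) (F : Finset ℕ) (h : isFace8 F) : vdwFace n 3 F := by
  obtain ⟨hne, i, hi, a, ha, hle, hsub⟩ := h
  simp only [Finset.mem_Icc] at hi ha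
  exact ⟨hne, _, ⟨i, a, hi.1, ha.1, by omega, rfl⟩, hsub⟩

lemma PhiF_pair (x y : ℕ) (h : x < y) : PhiF {x, y} = phiPair x y := by
  have hne : ({x, y} : Finset ℕ).Nonempty := ⟨x, by simp⟩
  rw [PhiF, dif_pos hne, pair_min x y h, pair_max x y h]

/-- all the facts about an edge {x,y} of vdw(n,3) -/
lemma edge_data (n : ℕ) (hn : 8 ≤ n) (x y : ℕ) (hxy : x < y)
    (hf : vdwFace n 3 {x, y}) :
    vdwFace n 3 (phiPair x y) ∧ (phiPair x y).card = 3 := by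
  obtain ⟨hx, hb⟩ := (pair_face_iff n x y hxy).1 hf
  rcases le_or_gt (bEdge x y) 8 with h8 | h8
  · have hy8 : y ≤ 8 := le_trans (bEdge_ge x y) h8
    have := tab_good y (Finset.mem_range.2 (by omega)) x (Finset.mem_range.2 hxy) hx h8
    rw [phiPair_low x y h8]
    exact ⟨isFace8_face n hn _ this.1, this.2.1⟩
  · exact phi_face_big n x y hx hxy hb (by omega)

lemma phi_inj_full (x1 y1 x2 y2 : ℕ) (hx1 : 1 ≤ x1) (h1 : x1 < y1)
    (hx2 : 1 ≤ x2) (h2 : x2 < y2) (hb1 : bEdge x1 y1 ≤ 8 ∨ 9 ≤ bEdge x1 y1)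
    (h : phiPair x1 y1 = phiPair x2 y2) : x1 = x2 ∧ y1 = y2 := by
  rcases le_or_gt (bEdge x1 y1) 8 with hA | hA <;>
    rcases le_or_gt (bEdge x2 y2) 8 with hB | hB
  · have hy1 : y1 ≤ 8 := le_trans (bEdge_ge x1 y1) hA
    have hy2 : y2 ≤ 8 := le_trans (bEdge_ge x2 y2) hB
    rw [phiPair_low x1 y1 hA, phiPair_low x2 y2 hB] at h
    exact tab_inj y1 (Finset.mem_range.2 (by omega)) x1 (Finset.mem_range.2 h1)
      y2 (Finset.mem_range.2 (by omega)) x2 (Finset.mem_range.2 h2) hx1 hA hx2 hB h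
  · exfalso
    obtain ⟨z, hz, hz9⟩ := phi_ge9 x2 y2 hx2 h2 (by omega)
    rw [← h, phiPair_low x1 y1 hA] at hz
    have hy1 : y1 ≤ 8 := le_trans (bEdge_ge x1 y1) hA
    have := (tab_good y1 (Finset.mem_range.2 (by omega)) x1 (Finset.mem_range.2 h1)
      hx1 hA).2.2 hz
    rw [Finset.mem_Icc] at this
    omega
  · exfalso
    obtain ⟨z, hz, hz9⟩ := phi_ge9 x1 y1 hx1 h1 (by omega)
    rw [h, phiPair_low x2 y2 hB] at hz
    have hy2 : y2 ≤ 8 := le_trans (bEdge_ge x2 y2) hB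
    have := (tab_good y2 (Finset.mem_range.2 (by omega)) x2 (Finset.mem_range.2 h2)
      hx2 hB).2.2 hz
    rw [Finset.mem_Icc] at this
    omega
  · exact phi_inj_big x1 y1 x2 y2 hx1 h1 hx2 h2 (by omega) (by omega) h

/-- For every integer `n ≥ 8`, the `f`-vector of `vdw(n,3)`
satisfies `f_1 ≤ f_2`: the number of one-dimensional faces is at most the number
of two-dimensional faces. -/
theorem vdw_f_vector_k_eq_three (n : ℕ) (hn : 8 ≤ n) : vdwF n 3 1 ≤ vdwF n 3 2 := by
  unfold vdwF
  apply Set.ncard_le_ncard_of_injOn PhiF ?_ ?_ (faces_finite n 3 3)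
  · rintro F ⟨hface, hcard⟩
    obtain ⟨x, y, hxy, rfl⟩ := card_two_repr F hcard
    rw [PhiF_pair x y hxy]
    exact ⟨(edge_data n hn x y hxy hface).1, (edge_data n hn x y hxy hface).2⟩
  · rintro F1 ⟨hf1, hc1⟩ F2 ⟨hf2, hc2⟩ hEq
    obtain ⟨x1, y1, h1, rfl⟩ := card_two_repr F1 hc1
    obtain ⟨x2, y2, h2, rfl⟩ := card_two_repr F2 hc2
    rw [PhiF_pair x1 y1 h1, PhiF_pair x2 y2 h2] at hEq
    have hx1 : 1 ≤ x1 := by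
      have := face_subset_Icc n 3 _ hf1 (show x1 ∈ ({x1, y1} : Finset ℕ) by simp)
      rw [Finset.mem_Icc] at this; exact this.1
    have hx2 : 1 ≤ x2 := by
      have := face_subset_Icc n 3 _ hf2 (show x2 ∈ ({x2, y2} : Finset ℕ) by simp)
      rw [Finset.mem_Icc] at this; exact this.1
    obtain ⟨hx, hy⟩ := phi_inj_full x1 y1 x2 y2 hx1 h1 hx2 h2 (by omega) hEq
    rw [hx, hy]
end

section
/- Let K be a field and let n ≥ 7 be an integer. For the linear form ℓ = x_1 + ⋯ + x_n, the multiplication map ×ℓ : A(vdw(n,3))_2 → A(vdw(n,3))_3 does not have maximal rank; consequently A(vdw(n,3)) fails the Weak Lefschetz Property in degree two. -/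
open MvPolynomial

namespace VDW

variable {K : Type*} [Field K] {n k : ℕ}

lemma face_mono {E F : Finset ℕ} (hF : vdwFace n k F) (hE : E ⊆ F)
    (hne : E.Nonempty) : vdwFace n k E := by
  obtain ⟨-, G, hG, hFG⟩ := hF
  exact ⟨hne, G, hG, hE.trans hFG⟩

/-- A "good" exponent: squarefree with support a face (or empty). -/
def good (n k : ℕ) (d : Fin n →₀ ℕ) : Prop :=
  (∀ j, d j ≤ 1) ∧ (d.support.Nonempty → vdwFace n k (d.support.image (fun j : Fin n => (j : ℕ) + 1)))

lemma good_of_add {d e : Fin n →₀ ℕ} (h : good n k (d + e)) : good n k e := by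
  refine ⟨fun j => le_trans (by simp) (h.1 j), fun hne => ?_⟩
  have hsub : e.support ⊆ (d + e).support := by
    intro j hj
    simp only [Finsupp.mem_support_iff, Finsupp.add_apply] at *
    omega
  refine face_mono (h.2 ?_) (Finset.image_subset_image hsub) (hne.image _)
  exact hne.mono hsub

/-- The ideal of polynomials all of whose monomials are "bad". -/
def badIdeal (K : Type*) [Field K] (n k : ℕ) : Ideal (MvPolynomial (Fin n) K) where
  carrier := {p | ∀ d ∈ p.support, ¬ good n k d}
  zero_mem' := by simp
  add_mem' := by
    intro p q hp hq d hd
    have := MvPolynomial.support_add (p := p) (q := q) hd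
    rcases Finset.mem_union.mp this with h | h
    exacts [hp d h, hq d h]
  smul_mem' := by
    intro c p hp d hd
    have hd' : d ∈ (c * p).support := hd
    have := MvPolynomial.support_mul c p hd'
    rcases Finset.mem_add.mp this with ⟨d1, hd1, d2, hd2, rfl⟩
    exact fun hg => hp d2 hd2 (good_of_add hg)

lemma mem_badIdeal {p : MvPolynomial (Fin n) K} :
    p ∈ badIdeal K n k ↔ ∀ d ∈ p.support, ¬ good n k d := Iff.rfl

lemma prod_X_eq (S : Finset (Fin n)) :
    (∏ j ∈ S, (X j : MvPolynomial (Fin n) K)) = monomial (∑ j ∈ S, Finsupp.single j 1) 1 := by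
  classical
  induction S using Finset.induction with
  | empty => simp [monomial_eq]
  | @insert j S hj ih =>
      rw [Finset.prod_insert hj, Finset.sum_insert hj, ih, X, monomial_mul, one_mul]

lemma sum_single_apply (S : Finset (Fin n)) (a : Fin n) :
    (∑ j ∈ S, Finsupp.single j 1) a = if a ∈ S then 1 else 0 := by
  classical
  rw [Finsupp.finset_sum_apply]
  simp [Finsupp.single_apply, Finset.sum_ite_eq' S a (fun _ => 1)]

lemma support_sum_single (S : Finset (Fin n)) :
    (∑ j ∈ S, Finsupp.single j (1:ℕ)).support = S := by
  ext a
  simp only [Finsupp.mem_support_iff, sum_single_apply]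
  by_cases h : a ∈ S <;> simp [h]

/-- `vdwIdeal ≤ badIdeal`. -/
lemma vdwIdeal_le_badIdeal : vdwIdeal K n k ≤ badIdeal K n k := by
  classical
  rw [vdwIdeal, Ideal.span_le]
  rintro m (⟨S, hS, hface, rfl⟩ | ⟨j, rfl⟩)
  · intro d hd
    rw [prod_X_eq, support_monomial] at hd
    simp only [if_neg (one_ne_zero (α := K)), Finset.mem_singleton] at hd
    subst hd
    rintro ⟨-, h2⟩
    rw [support_sum_single] at h2
    exact hface (h2 hS)
  · intro d hd
    classical
    rw [X_pow_eq_monomial, support_monomial] at hd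
    simp only [if_neg (one_ne_zero (α := K)), Finset.mem_singleton] at hd
    subst hd
    rintro ⟨h1, -⟩
    have := h1 j
    rw [Finsupp.single_eq_same] at this
    omega

/-- Each bad monomial lies in `vdwIdeal`. -/
lemma monomial_mem_vdwIdeal {d : Fin n →₀ ℕ} (hd : ¬ good n k d) :
    (monomial d (1:K)) ∈ vdwIdeal K n k := by
  classical
  rw [good, not_and_or] at hd
  rcases hd with hd | hd
  · push_neg at hd
    obtain ⟨j, hj⟩ := hd
    have : (monomial d (1:K)) = monomial (d - Finsupp.single j 2) 1 * X j ^ 2 := by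
      rw [X_pow_eq_monomial, monomial_mul, one_mul]
      have hd2 : (d - Finsupp.single j 2) + Finsupp.single j 2 = d := by
        ext a
        simp only [Finsupp.add_apply, Finsupp.tsub_apply, Finsupp.single_apply]
        by_cases h : j = a
        · subst h; simp; omega
        · simp [h]
      rw [hd2]
    rw [this]
    exact Ideal.mul_mem_left _ _ (Ideal.subset_span (Or.inr ⟨j, rfl⟩))
  · push_neg at hd
    obtain ⟨hne, hface⟩ := hd
    have : (monomial d (1:K)) =
        monomial (d - ∑ j ∈ d.support, Finsupp.single j 1) 1 * ∏ j ∈ d.support, X j := by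
      rw [prod_X_eq, monomial_mul, one_mul]
      have hd2 : (d - ∑ j ∈ d.support, Finsupp.single j 1) + ∑ j ∈ d.support, Finsupp.single j 1
          = d := by
        ext a
        rw [Finsupp.add_apply, Finsupp.tsub_apply, sum_single_apply]
        by_cases h : a ∈ d.support
        · have : 1 ≤ d a := by
            rw [Finsupp.mem_support_iff] at h; omega
          simp [h]; omega
        · rw [Finsupp.notMem_support_iff] at h; simp [h]
      rw [hd2]
    rw [this]
    exact Ideal.mul_mem_left _ _
      (Ideal.subset_span (Or.inl ⟨d.support, hne, hface, rfl⟩))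



/-- `s3 d = (-1)^ν` if `d = 3^ν`, and `0` otherwise. -/
def s3 (d : ℕ) : ℤ :=
  if 3 ^ (padicValNat 3 d) = d then (-1) ^ (padicValNat 3 d) else 0

lemma s3_zero : s3 0 = 0 := by simp [s3]

lemma s3_one : s3 1 = 1 := by simp [s3]

lemma s3_even (a : ℕ) : s3 (2 * a) = 0 := by
  rcases Nat.eq_zero_or_pos a with rfl | ha
  · simp [s3]
  rw [s3, if_neg]
  intro h
  have h3 : Odd (3 ^ padicValNat 3 (2 * a)) := Odd.pow (by decide)
  rw [h] at h3
  exact (Nat.not_odd_iff_even.mpr ⟨a, by ring⟩) h3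

lemma s3_three_mul (a : ℕ) : s3 (3 * a) = - s3 a := by
  rcases Nat.eq_zero_or_pos a with rfl | ha
  · simp [s3]
  have h3 : (Fact (Nat.Prime 3)) := ⟨by norm_num⟩
  have hval : padicValNat 3 (3 * a) = padicValNat 3 a + 1 := by
    rw [padicValNat.mul (by norm_num) (by omega), padicValNat.self (by norm_num)]
    omega
  rw [s3, s3, hval]
  by_cases h : 3 ^ padicValNat 3 a = a
  · rw [if_pos (by rw [pow_succ, mul_comm _ 3, h]), if_pos h]
    ring
  · rw [if_neg, if_neg h, neg_zero]
    intro hc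
    apply h
    have : 3 * (3 ^ padicValNat 3 a) = 3 * a := by rw [← hc]; ring
    omega

lemma s3_odd (a : ℕ) : s3 a * (1 + (-1)^a) = 0 := by
  rcases Nat.even_or_odd a with he | ho
  · rcases he with ⟨b, rfl⟩
    rw [show b + b = 2 * b by ring, s3_even, zero_mul]
  · rw [Odd.neg_one_pow ho]
    ring



/-- kernel-vector coefficient -/
def KC (i j : ℕ) : ℤ := (-1)^i * s3 (j - i)

lemma KC_of_le {i j : ℕ} (h : j ≤ i) : KC i j = 0 := by
  rw [KC, Nat.sub_eq_zero_of_le h, s3_zero, mul_zero]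

lemma triA (x a : ℕ) : KC x (x+a) + KC x (x+2*a) + KC (x+a) (x+2*a) = 0 := by
  simp only [KC, Nat.add_sub_cancel_left, show x + 2*a - (x+a) = a by omega,
    show x + 2*a - x = 2*a by omega, s3_even, pow_add]
  linear_combination ((-1:ℤ)^x) * s3_odd a

lemma triB (x a : ℕ) : KC x (x+a) + KC x (x+3*a) + KC (x+a) (x+3*a) = 0 := by
  simp only [KC, Nat.add_sub_cancel_left, show x + 3*a - (x+a) = 2*a by omega,
    show x + 3*a - x = 3*a by omega, s3_even, s3_three_mul, pow_add]
  ring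

lemma triC (x a : ℕ) : KC x (x+2*a) + KC x (x+3*a) + KC (x+2*a) (x+3*a) = 0 := by
  have h2 : ((-1:ℤ))^(x+2*a) = (-1)^x := by
    rw [pow_add, pow_mul]; norm_num
  simp only [KC, show x + 2*a - x = 2*a by omega, show x + 3*a - x = 3*a by omega,
    show x + 3*a - (x+2*a) = a by omega, s3_even, s3_three_mul, h2]
  ring

variable {K : Type*} [Field K] {n : ℕ}

/-- basis exponent -/
noncomputable def E {n : ℕ} (j : Fin n) : Fin n →₀ ℕ := Finsupp.single j 1

lemma E_apply {j a : Fin n} : (E j) a = if j = a then 1 else 0 := Finsupp.single_apply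

lemma support_E3 {a b c : Fin n} (hab : a ≠ b) (hac : a ≠ c) (hbc : b ≠ c) :
    (E a + E b + E c).support = {a, b, c} := by
  ext j
  simp only [Finsupp.mem_support_iff, Finsupp.add_apply, E_apply, Finset.mem_insert,
    Finset.mem_singleton]
  by_cases h1 : a = j <;> by_cases h2 : b = j <;> by_cases h3 : c = j <;>
    simp [h1, h2, h3, eq_comm]

lemma E3_sub_left {a b c : Fin n} : (E a + E b + E c) - E a = E b + E c := by
  have h : E a + E b + E c = E b + E c + E a := by abel
  rw [h, add_tsub_cancel_right]

lemma E3_sub_mid {a b c : Fin n} : (E a + E b + E c) - E b = E a + E c := by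
  have h : E a + E b + E c = E a + E c + E b := by abel
  rw [h, add_tsub_cancel_right]

lemma E3_sub_right {a b c : Fin n} : (E a + E b + E c) - E c = E a + E b :=
  add_tsub_cancel_right _ _

/-- Key coefficient formula: the coefficient of a squarefree cubic monomial in `ℓ·h`. -/
lemma coeff_ell_mul (h : MvPolynomial (Fin n) K) {a b c : Fin n}
    (hab : a ≠ b) (hac : a ≠ c) (hbc : b ≠ c) :
    coeff (E a + E b + E c) ((∑ j : Fin n, X j) * h) =
      coeff (E b + E c) h + coeff (E a + E c) h + coeff (E a + E b) h := by
  classical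
  rw [Finset.sum_mul, coeff_sum]
  simp_rw [coeff_X_mul']
  rw [support_E3 hab hac hbc]
  have huniv : ∀ j : Fin n,
      (if j ∈ ({a, b, c} : Finset (Fin n)) then
        coeff ((E a + E b + E c) - Finsupp.single j 1) h else 0) =
      (if j ∈ ({a, b, c} : Finset (Fin n)) then
        coeff ((E a + E b + E c) - E j) h else 0) := fun j => rfl
  simp_rw [huniv]
  rw [Finset.sum_ite_mem, Finset.univ_inter]
  rw [Finset.sum_insert (by simp [hab, hac]), Finset.sum_insert (by simp [hbc]),
    Finset.sum_singleton, E3_sub_left, E3_sub_mid, E3_sub_right]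
  ring



noncomputable def Pker (K : Type*) [Field K] (n : ℕ) : MvPolynomial (Fin n) K :=
  ∑ i : Fin n, ∑ j : Fin n, monomial (E i + E j) ((KC i.val j.val : ℤ) : K)

lemma degree_E_add_E (i j : Fin n) : (E i + E j).degree = 2 := by
  rw [Finsupp.degree_eq_weight_one, map_add]
  simp [E, Finsupp.weight_apply, Finsupp.sum_single_index]

lemma Pker_isHomogeneous : (Pker K n).IsHomogeneous 2 := by
  apply IsHomogeneous.sum
  intro i _
  apply IsHomogeneous.sum
  intro j _
  exact isHomogeneous_monomial _ (degree_E_add_E i j)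

lemma E_add_E_eq {i j a b : Fin n} (hab : a ≠ b) (h : E i + E j = E a + E b) :
    (i = a ∧ j = b) ∨ (i = b ∧ j = a) := by
  have ha : ((if i = a then 1 else 0) + if j = a then 1 else 0 : ℕ) = 1 := by
    have := DFunLike.congr_fun h a
    simp only [Finsupp.add_apply, E_apply] at this
    rw [this]
    simp [Ne.symm hab]
  have hb : ((if i = b then 1 else 0) + if j = b then 1 else 0 : ℕ) = 1 := by
    have := DFunLike.congr_fun h b
    simp only [Finsupp.add_apply, E_apply] at this
    rw [this]
    simp [hab]
  by_cases hia : i = a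
  · subst hia
    rw [if_neg hab] at hb
    left
    refine ⟨rfl, ?_⟩
    by_cases hjb : j = b
    · exact hjb
    · rw [if_neg hjb] at hb; omega
  · rw [if_neg hia] at ha
    right
    have hja : j = a := by
      by_cases h' : j = a
      · exact h'
      · rw [if_neg h'] at ha; omega
    subst hja
    refine ⟨?_, rfl⟩
    rw [if_neg hab] at hb
    by_cases hib : i = b
    · exact hib
    · rw [if_neg hib] at hb; omega

lemma coeff_Pker {a b : Fin n} (hab : a ≠ b) :
    coeff (E a + E b) (Pker K n) = ((KC a.val b.val + KC b.val a.val : ℤ) : K) := by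
  classical
  rw [Pker, coeff_sum]
  simp_rw [coeff_sum, coeff_monomial]
  have key : ∀ i j : Fin n,
      (if E i + E j = E a + E b then ((KC i.val j.val : ℤ) : K) else 0) =
      (if i = a ∧ j = b then ((KC a.val b.val : ℤ) : K) else 0) +
      (if i = b ∧ j = a then ((KC b.val a.val : ℤ) : K) else 0) := by
    intro i j
    by_cases h : E i + E j = E a + E b
    · rcases E_add_E_eq hab h with ⟨rfl, rfl⟩ | ⟨rfl, rfl⟩
      · rw [if_pos h, if_pos ⟨rfl, rfl⟩, if_neg (fun hc => hab hc.1), add_zero]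
      · rw [if_pos h, if_neg (fun hc : _ ∧ _ => hab hc.2), if_pos ⟨rfl, rfl⟩, zero_add]
    · rw [if_neg h]
      have h1 : ¬(i = a ∧ j = b) := by
        rintro ⟨rfl, rfl⟩; exact h rfl
      have h2 : ¬(i = b ∧ j = a) := by
        rintro ⟨rfl, rfl⟩
        apply h
        abel
      rw [if_neg h1, if_neg h2, add_zero]
  have sumhelper : ∀ (p q : Fin n) (v : K),
      (∑ i : Fin n, ∑ j : Fin n, if i = p ∧ j = q then v else 0) = v := by
    intro p q v
    have hinner : ∀ i : Fin n, (∑ j : Fin n, if i = p ∧ j = q then v else 0)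
        = if i = p then v else 0 := by
      intro i
      by_cases h : i = p
      · subst h; simp
      · simp [h]
    rw [Finset.sum_congr rfl (fun i _ => hinner i)]
    simp
  simp_rw [key, Finset.sum_add_distrib]
  rw [sumhelper, sumhelper, Int.cast_add]



/-- extract a sorted triple from a 3-element finset -/
lemma exists_sorted_triple {s : Finset (Fin n)} (hs : s.card = 3) :
    ∃ a b c : Fin n, a.val < b.val ∧ b.val < c.val ∧ s = {a, b, c} := by
  obtain ⟨a, b, c, hab, hac, hbc, rfl⟩ := Finset.card_eq_three.mp hs
  have hab' : a.val ≠ b.val := fun h => hab (Fin.ext h)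
  have hac' : a.val ≠ c.val := fun h => hac (Fin.ext h)
  have hbc' : b.val ≠ c.val := fun h => hbc (Fin.ext h)
  have perm : ∀ x y z : Fin n, ({x, y, z} : Finset (Fin n)) = {a, b, c} →
      x.val < y.val → y.val < z.val → ∃ a' b' c' : Fin n,
      a'.val < b'.val ∧ b'.val < c'.val ∧ ({a, b, c} : Finset (Fin n)) = {a', b', c'} :=
    fun x y z h h1 h2 => ⟨x, y, z, h1, h2, h.symm⟩
  rcases Nat.lt_trichotomy a.val b.val with h1 | h1 | h1
  · rcases Nat.lt_trichotomy b.val c.val with h2 | h2 | h2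
    · exact ⟨a, b, c, h1, h2, rfl⟩
    · exact absurd h2 hbc'
    · rcases Nat.lt_trichotomy a.val c.val with h3 | h3 | h3
      · refine perm a c b ?_ h3 h2
        ext x; simp; tauto
      · exact absurd h3 hac'
      · refine perm c a b ?_ h3 h1
        ext x; simp; tauto
  · exact absurd h1 hab'
  · rcases Nat.lt_trichotomy a.val c.val with h2 | h2 | h2
    · refine perm b a c ?_ h1 h2
      ext x; simp; tauto
    · exact absurd h2 hac'
    · rcases Nat.lt_trichotomy b.val c.val with h3 | h3 | h3
      · refine perm b c a ?_ h3 h2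
        ext x; simp; tauto
      · exact absurd h3 hbc'
      · refine perm c b a ?_ h3 h1
        ext x; simp; tauto

lemma squarefree_eq_E3 {d : Fin n →₀ ℕ} {a b c : Fin n} (hsq : ∀ j, d j ≤ 1)
    (hab : a ≠ b) (hac : a ≠ c) (hbc : b ≠ c)
    (hsupp : d.support = {a, b, c}) : d = E a + E b + E c := by
  have hmem : ∀ j : Fin n, d j = if j ∈ d.support then 1 else 0 := by
    intro j
    by_cases h : j ∈ d.support
    · rw [if_pos h]
      have := Finsupp.mem_support_iff.mp h
      have := hsq j
      omega
    · rw [if_neg h]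
      exact Finsupp.notMem_support_iff.mp h
  ext j
  rw [hmem j, hsupp]
  simp only [Finsupp.add_apply, E_apply, Finset.mem_insert, Finset.mem_singleton]
  by_cases ha : a = j <;> by_cases hb : b = j <;> by_cases hc : c = j
  · exact absurd (ha.trans hb.symm) hab
  · exact absurd (ha.trans hb.symm) hab
  · exact absurd (ha.trans hc.symm) hac
  · simp [ha, hb, hc, eq_comm]
  · exact absurd (hb.trans hc.symm) hbc
  · simp [ha, hb, hc, eq_comm]
  · simp [ha, hb, hc, eq_comm]
  · simp [ha, hb, hc, eq_comm]

/-- The main kernel lemma. -/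
lemma ell_mul_Pker_mem_bad :
    ∀ d ∈ ((∑ j : Fin n, X j) * Pker K n).support, ¬ good n 3 d := by
  intro d hd hgood
  have hne : coeff d ((∑ j : Fin n, X j) * Pker K n) ≠ 0 := by
    rwa [MvPolynomial.mem_support_iff] at hd
  -- degree of d is 3
  have hhom : ((∑ j : Fin n, X j) * Pker K n).IsHomogeneous 3 := by
    have h1 : (∑ j : Fin n, X j : MvPolynomial (Fin n) K).IsHomogeneous 1 :=
      IsHomogeneous.sum _ _ _ (fun j _ => isHomogeneous_X _ _)
    exact h1.mul Pker_isHomogeneous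
  have hdeg : d.degree = 3 := by
    by_contra h
    exact hne (hhom.coeff_eq_zero h)
  -- support of d has three elements
  have hcard : d.support.card = 3 := by
    have : d.degree = ∑ j ∈ d.support, d j := rfl
    have hone : ∀ j ∈ d.support, d j = 1 := by
      intro j hj
      have := Finsupp.mem_support_iff.mp hj
      have := hgood.1 j
      omega
    rw [this, Finset.sum_congr rfl hone, Finset.sum_const, smul_eq_mul, mul_one] at hdeg
    exact hdeg
  obtain ⟨a, b, c, h1, h2, hsupp⟩ := exists_sorted_triple hcard
  have hab : a ≠ b := fun h => by simp [h] at h1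
  have hac : a ≠ c := fun h => by have := h1.trans h2; simp [h] at this
  have hbc : b ≠ c := fun h => by simp [h] at h2
  have hd3 : d = E a + E b + E c := squarefree_eq_E3 hgood.1 hab hac hbc hsupp
  -- compute the coefficient
  rw [hd3, coeff_ell_mul _ hab hac hbc, coeff_Pker hbc, coeff_Pker hac, coeff_Pker hab] at hne
  rw [KC_of_le (le_of_lt h2), KC_of_le (le_of_lt (h1.trans h2)), KC_of_le (le_of_lt h1)] at hne
  -- the face condition
  have hface := hgood.2 (by rw [hsupp]; exact ⟨a, by simp⟩)
  rw [hsupp] at hface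
  obtain ⟨-, G, ⟨i, st, hi1, hst1, hile, rfl⟩, hsub⟩ := hface
  have hmem : ∀ x : Fin n, x ∈ ({a, b, c} : Finset (Fin n)) →
      ∃ j, j < 4 ∧ x.val + 1 = i + j * st := by
    intro x hx
    have : x.val + 1 ∈ (Finset.range (3+1)).image (fun j => i + j * st) := by
      apply hsub
      exact Finset.mem_image_of_mem _ hx
    obtain ⟨j, hj, hje⟩ := Finset.mem_image.mp this
    exact ⟨j, Finset.mem_range.mp hj, hje.symm⟩
  obtain ⟨ja, hja, hea⟩ := hmem a (by simp)
  obtain ⟨jb, hjb, heb⟩ := hmem b (by simp)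
  obtain ⟨jc, hjc, hec⟩ := hmem c (by simp)
  apply hne
  have hz : KC b.val c.val + (KC a.val c.val + KC a.val b.val) = 0 := by
    interval_cases ja <;> interval_cases jb <;> interval_cases jc <;>
      first
        | omega
        | (have hbv : (b:ℕ) = (a:ℕ) + st := by omega
           have hcv : (c:ℕ) = (a:ℕ) + 2*st := by omega
           rw [hbv, hcv]
           linarith [triA (a:ℕ) st])
        | (have hbv : (b:ℕ) = (a:ℕ) + st := by omega
           have hcv : (c:ℕ) = (a:ℕ) + 3*st := by omega
           rw [hbv, hcv]
           linarith [triB (a:ℕ) st])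
        | (have hbv : (b:ℕ) = (a:ℕ) + 2*st := by omega
           have hcv : (c:ℕ) = (a:ℕ) + 3*st := by omega
           rw [hbv, hcv]
           linarith [triC (a:ℕ) st])
  rw [show ((KC b.val c.val + 0 : ℤ) : K) + ((KC a.val c.val + 0 : ℤ) : K)
      + ((KC a.val b.val + 0 : ℤ) : K) = ((KC b.val c.val + (KC a.val c.val + KC a.val b.val) : ℤ) : K) by
    push_cast; ring, hz, Int.cast_zero]



lemma E3_inj {a b c a' b' c' : Fin n} (h1 : a.val < b.val) (h2 : b.val < c.val)
    (h1' : a'.val < b'.val) (h2' : b'.val < c'.val)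
    (h : E a + E b + E c = E a' + E b' + E c') :
    a.val = a'.val ∧ b.val = b'.val ∧ c.val = c'.val := by
  have hab : a ≠ b := fun e => by simp [e] at h1
  have hac : a ≠ c := fun e => by have := h1.trans h2; simp [e] at this
  have hbc : b ≠ c := fun e => by simp [e] at h2
  have hab' : a' ≠ b' := fun e => by simp [e] at h1'
  have hac' : a' ≠ c' := fun e => by have := h1'.trans h2'; simp [e] at this
  have hbc' : b' ≠ c' := fun e => by simp [e] at h2'
  have hs : ({a, b, c} : Finset (Fin n)) = {a', b', c'} := by
    rw [← support_E3 hab hac hbc, ← support_E3 hab' hac' hbc', h]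
  have m1 : a.val = a'.val ∨ a.val = b'.val ∨ a.val = c'.val := by
    have : a ∈ ({a', b', c'} : Finset (Fin n)) := by rw [← hs]; simp
    simpa [Fin.ext_iff] using this
  have m2 : b.val = a'.val ∨ b.val = b'.val ∨ b.val = c'.val := by
    have : b ∈ ({a', b', c'} : Finset (Fin n)) := by rw [← hs]; simp
    simpa [Fin.ext_iff] using this
  have m3 : c.val = a'.val ∨ c.val = b'.val ∨ c.val = c'.val := by
    have : c ∈ ({a', b', c'} : Finset (Fin n)) := by rw [← hs]; simp
    simpa [Fin.ext_iff] using this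
  have m4 : a'.val = a.val ∨ a'.val = b.val ∨ a'.val = c.val := by
    have : a' ∈ ({a, b, c} : Finset (Fin n)) := by rw [hs]; simp
    simpa [Fin.ext_iff] using this
  omega

section Window
variable (hn : 7 ≤ n)

/-- vertex `m+1` as element of `Fin n` (0-indexed `m`), for `m < 7`. -/
def vx (m : ℕ) (hm : m < 7) : Fin n := ⟨m, lt_of_lt_of_le hm hn⟩

/-- the triple exponent -/
noncomputable def T3 (a b c : ℕ) (ha : a < 7) (hb : b < 7) (hc : c < 7) : Fin n →₀ ℕ :=
  E (vx hn a ha) + E (vx hn b hb) + E (vx hn c hc)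

/-- the cokernel functional -/
noncomputable def phiW : MvPolynomial (Fin n) K →ₗ[K] K :=
    - lcoeff K (T3 hn 0 1 2 (by omega) (by omega) (by omega))
    + lcoeff K (T3 hn 0 1 3 (by omega) (by omega) (by omega))
    - lcoeff K (T3 hn 0 2 3 (by omega) (by omega) (by omega))
    + lcoeff K (T3 hn 0 2 4 (by omega) (by omega) (by omega))
    + lcoeff K (T3 hn 0 2 6 (by omega) (by omega) (by omega))
    - lcoeff K (T3 hn 0 4 6 (by omega) (by omega) (by omega))
    + lcoeff K (T3 hn 1 2 4 (by omega) (by omega) (by omega))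
    - lcoeff K (T3 hn 1 3 4 (by omega) (by omega) (by omega))
    + lcoeff K (T3 hn 2 3 5 (by omega) (by omega) (by omega))
    - lcoeff K (T3 hn 2 4 5 (by omega) (by omega) (by omega))
    - lcoeff K (T3 hn 2 4 6 (by omega) (by omega) (by omega))
    + lcoeff K (T3 hn 3 4 6 (by omega) (by omega) (by omega))
    - lcoeff K (T3 hn 3 5 6 (by omega) (by omega) (by omega))
    + lcoeff K (T3 hn 4 5 6 (by omega) (by omega) (by omega))

/-- `phiW` kills `ℓ·h` for every `h`. -/
lemma phiW_ell_mul (h : MvPolynomial (Fin n) K) :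
    phiW hn ((∑ j : Fin n, X j) * h) = 0 := by
  have hne : ∀ (p q : ℕ) (hp : p < 7) (hq : q < 7), p ≠ q → vx hn p hp ≠ vx hn q hq := by
    intro p q hp hq hpq e
    exact hpq (by simpa [vx, Fin.ext_iff] using e)
  simp only [phiW, LinearMap.add_apply, LinearMap.sub_apply, LinearMap.neg_apply, lcoeff_apply, T3]
  rw [coeff_ell_mul h (hne 0 1 _ _ (by omega)) (hne 0 2 _ _ (by omega)) (hne 1 2 _ _ (by omega)),
      coeff_ell_mul h (hne 0 1 _ _ (by omega)) (hne 0 3 _ _ (by omega)) (hne 1 3 _ _ (by omega)),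
      coeff_ell_mul h (hne 0 2 _ _ (by omega)) (hne 0 3 _ _ (by omega)) (hne 2 3 _ _ (by omega)),
      coeff_ell_mul h (hne 0 2 _ _ (by omega)) (hne 0 4 _ _ (by omega)) (hne 2 4 _ _ (by omega)),
      coeff_ell_mul h (hne 0 2 _ _ (by omega)) (hne 0 6 _ _ (by omega)) (hne 2 6 _ _ (by omega)),
      coeff_ell_mul h (hne 0 4 _ _ (by omega)) (hne 0 6 _ _ (by omega)) (hne 4 6 _ _ (by omega)),
      coeff_ell_mul h (hne 1 2 _ _ (by omega)) (hne 1 4 _ _ (by omega)) (hne 2 4 _ _ (by omega)),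
      coeff_ell_mul h (hne 1 3 _ _ (by omega)) (hne 1 4 _ _ (by omega)) (hne 3 4 _ _ (by omega)),
      coeff_ell_mul h (hne 2 3 _ _ (by omega)) (hne 2 5 _ _ (by omega)) (hne 3 5 _ _ (by omega)),
      coeff_ell_mul h (hne 2 4 _ _ (by omega)) (hne 2 5 _ _ (by omega)) (hne 4 5 _ _ (by omega)),
      coeff_ell_mul h (hne 2 4 _ _ (by omega)) (hne 2 6 _ _ (by omega)) (hne 4 6 _ _ (by omega)),
      coeff_ell_mul h (hne 3 4 _ _ (by omega)) (hne 3 6 _ _ (by omega)) (hne 4 6 _ _ (by omega)),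
      coeff_ell_mul h (hne 3 5 _ _ (by omega)) (hne 3 6 _ _ (by omega)) (hne 5 6 _ _ (by omega)),
      coeff_ell_mul h (hne 4 5 _ _ (by omega)) (hne 4 6 _ _ (by omega)) (hne 5 6 _ _ (by omega))]
  ring


end Window

section Window2
variable (hn : 7 ≤ n)

lemma E3_squarefree {a b c : Fin n} (hab : a ≠ b) (hac : a ≠ c) (hbc : b ≠ c) :
    ∀ j, (E a + E b + E c) j ≤ 1 := by
  intro j
  simp only [Finsupp.add_apply, E_apply]
  by_cases ha : a = j <;> by_cases hb : b = j <;> by_cases hc : c = j <;>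
    first
      | (exact absurd (ha.trans hb.symm) hab)
      | (exact absurd (ha.trans hc.symm) hac)
      | (exact absurd (hb.trans hc.symm) hbc)
      | simp [ha, hb, hc]

lemma good_T3 {a b c : ℕ} (ha : a < 7) (hb : b < 7) (hc : c < 7)
    (hab : a < b) (hbc : b < c) (i st : ℕ) (hi : 1 ≤ i) (hst : 1 ≤ st)
    (hle : i + 3 * st ≤ 7)
    (hsub : ({a+1, b+1, c+1} : Finset ℕ) ⊆ (Finset.range 4).image (fun j => i + j * st)) :
    good n 3 (T3 hn a b c ha hb hc) := by
  have hab' : vx hn a ha ≠ vx hn b hb := fun e => by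
    simp only [vx, Fin.ext_iff] at e; omega
  have hac' : vx hn a ha ≠ vx hn c hc := fun e => by
    simp only [vx, Fin.ext_iff] at e; omega
  have hbc' : vx hn b hb ≠ vx hn c hc := fun e => by
    simp only [vx, Fin.ext_iff] at e; omega
  constructor
  · exact E3_squarefree hab' hac' hbc'
  · intro _
    rw [T3, support_E3 hab' hac' hbc']
    have himg : (({vx hn a ha, vx hn b hb, vx hn c hc} : Finset (Fin n)).image
        (fun j : Fin n => (j : ℕ) + 1)) = {a+1, b+1, c+1} := by
      rw [Finset.image_insert, Finset.image_insert, Finset.image_singleton]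
      rfl
    rw [himg]
    refine ⟨⟨a+1, by simp⟩, (Finset.range 4).image (fun j => i + j * st),
      ⟨i, st, hi, hst, by omega, rfl⟩, hsub⟩

/-- `phiW` vanishes on polynomials all of whose monomials are bad. -/
lemma phiW_bad (p : MvPolynomial (Fin n) K) (hp : ∀ d ∈ p.support, ¬ good n 3 d) :
    phiW hn p = 0 := by
  have key : ∀ (a b c : ℕ) (ha : a < 7) (hb : b < 7) (hc : c < 7), good n 3 (T3 hn a b c ha hb hc) →
      coeff (T3 hn a b c ha hb hc) p = 0 := by
    intro a b c ha hb hc hgood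
    by_contra hne
    exact hp _ (MvPolynomial.mem_support_iff.mpr hne) hgood
  simp only [phiW, LinearMap.add_apply, LinearMap.sub_apply, LinearMap.neg_apply, lcoeff_apply]
  rw [key 0 1 2 _ _ _ (good_T3 hn _ _ _ (by omega) (by omega) 1 1 (by omega) (by omega) (by omega) (by decide)),
      key 0 1 3 _ _ _ (good_T3 hn _ _ _ (by omega) (by omega) 1 1 (by omega) (by omega) (by omega) (by decide)),
      key 0 2 3 _ _ _ (good_T3 hn _ _ _ (by omega) (by omega) 1 1 (by omega) (by omega) (by omega) (by decide)),
      key 0 2 4 _ _ _ (good_T3 hn _ _ _ (by omega) (by omega) 1 2 (by omega) (by omega) (by omega) (by decide)),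
      key 0 2 6 _ _ _ (good_T3 hn _ _ _ (by omega) (by omega) 1 2 (by omega) (by omega) (by omega) (by decide)),
      key 0 4 6 _ _ _ (good_T3 hn _ _ _ (by omega) (by omega) 1 2 (by omega) (by omega) (by omega) (by decide)),
      key 1 2 4 _ _ _ (good_T3 hn _ _ _ (by omega) (by omega) 2 1 (by omega) (by omega) (by omega) (by decide)),
      key 1 3 4 _ _ _ (good_T3 hn _ _ _ (by omega) (by omega) 2 1 (by omega) (by omega) (by omega) (by decide)),
      key 2 3 5 _ _ _ (good_T3 hn _ _ _ (by omega) (by omega) 3 1 (by omega) (by omega) (by omega) (by decide)),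
      key 2 4 5 _ _ _ (good_T3 hn _ _ _ (by omega) (by omega) 3 1 (by omega) (by omega) (by omega) (by decide)),
      key 2 4 6 _ _ _ (good_T3 hn _ _ _ (by omega) (by omega) 1 2 (by omega) (by omega) (by omega) (by decide)),
      key 3 4 6 _ _ _ (good_T3 hn _ _ _ (by omega) (by omega) 4 1 (by omega) (by omega) (by omega) (by decide)),
      key 3 5 6 _ _ _ (good_T3 hn _ _ _ (by omega) (by omega) 4 1 (by omega) (by omega) (by omega) (by decide)),
      key 4 5 6 _ _ _ (good_T3 hn _ _ _ (by omega) (by omega) 4 1 (by omega) (by omega) (by omega) (by decide))]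
  ring

/-- `phiW` detects the witness monomial `x₁x₂x₃`. -/
lemma phiW_detect :
    phiW hn (monomial (T3 hn 0 1 2 (by omega) (by omega) (by omega)) (1:K)) = -1 := by
  have hsort : ∀ (a b c : ℕ) (ha : a < 7) (hb : b < 7) (hc : c < 7), a < b → b < c →
      (vx hn a ha).val < (vx hn b hb).val ∧ (vx hn b hb).val < (vx hn c hc).val :=
    fun a b c ha hb hc h1 h2 => ⟨h1, h2⟩
  have key : ∀ (a b c : ℕ) (ha : a < 7) (hb : b < 7) (hc : c < 7), a < b → b < c →
      ¬(a = 0 ∧ b = 1 ∧ c = 2) →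
      coeff (T3 hn a b c ha hb hc) (monomial (T3 hn 0 1 2 (by omega) (by omega) (by omega)) (1:K)) = 0 := by
    intro a b c ha hb hc h1 h2 hne
    rw [coeff_monomial, if_neg]
    intro e
    have := E3_inj (a := vx hn 0 (by omega)) (b := vx hn 1 (by omega)) (c := vx hn 2 (by omega))
      (by exact Nat.zero_lt_one) (by exact Nat.one_lt_two) (h1 : a < b) (h2 : b < c) e
    exact hne ⟨this.1.symm, this.2.1.symm, this.2.2.symm⟩
  simp only [phiW, LinearMap.add_apply, LinearMap.sub_apply, LinearMap.neg_apply, lcoeff_apply]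
  rw [key 0 1 3 _ _ _ (by omega) (by omega) (by omega),
      key 0 2 3 _ _ _ (by omega) (by omega) (by omega),
      key 0 2 4 _ _ _ (by omega) (by omega) (by omega),
      key 0 2 6 _ _ _ (by omega) (by omega) (by omega),
      key 0 4 6 _ _ _ (by omega) (by omega) (by omega),
      key 1 2 4 _ _ _ (by omega) (by omega) (by omega),
      key 1 3 4 _ _ _ (by omega) (by omega) (by omega),
      key 2 3 5 _ _ _ (by omega) (by omega) (by omega),
      key 2 4 5 _ _ _ (by omega) (by omega) (by omega),
      key 2 4 6 _ _ _ (by omega) (by omega) (by omega),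
      key 3 4 6 _ _ _ (by omega) (by omega) (by omega),
      key 3 5 6 _ _ _ (by omega) (by omega) (by omega),
      key 4 5 6 _ _ _ (by omega) (by omega) (by omega),
      coeff_monomial, if_pos rfl]
  ring



end Window2

section Assembly
variable {K : Type*} [Field K] {n : ℕ}

lemma badIdeal_le_vdwIdeal {k : ℕ} : badIdeal K n k ≤ vdwIdeal K n k := by
  intro p hp
  rw [p.as_sum]
  apply Ideal.sum_mem
  intro d hd
  have hC : monomial d (coeff d p) = C (coeff d p) * monomial d 1 := by
    rw [C_mul_monomial, mul_one]
  rw [hC]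
  exact Ideal.mul_mem_left _ _ (monomial_mem_vdwIdeal (hp d hd))

instance findim_homog (i : ℕ) : FiniteDimensional K (homogeneousSubmodule (Fin n) K i) := by
  apply Submodule.finiteDimensional_of_le (S₂ := restrictTotalDegree (Fin n) K i)
  intro p hp
  rw [mem_restrictTotalDegree]
  exact ((mem_homogeneousSubmodule _ _).mp hp).totalDegree_le

instance findim_piece (k i : ℕ) : FiniteDimensional K (vdwPiece K n k i) := by
  rw [vdwPiece]
  exact Module.Finite.map _ _

lemma support_E2 {a b : Fin n} (hab : a ≠ b) :
    (E a + E b).support = {a, b} := by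
  ext j
  simp only [Finsupp.mem_support_iff, Finsupp.add_apply, E_apply, Finset.mem_insert,
    Finset.mem_singleton]
  by_cases h1 : a = j <;> by_cases h2 : b = j <;> simp [h1, h2, eq_comm]

lemma Pker_not_mem (hn : 7 ≤ n) : Pker K n ∉ vdwIdeal K n 3 := by
  intro h
  have hb := vdwIdeal_le_badIdeal h
  have h0 : (0:ℕ) < n := by omega
  have h1 : (1:ℕ) < n := by omega
  set a : Fin n := ⟨0, h0⟩ with hadef
  set b : Fin n := ⟨1, h1⟩ with hbdef
  have hab : a ≠ b := by simp [hadef, hbdef, Fin.ext_iff]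
  have hg : good n 3 (E a + E b) := by
    constructor
    · intro j
      simp only [Finsupp.add_apply, E_apply]
      by_cases ha : a = j <;> by_cases hbj : b = j <;>
        first
          | (exact absurd (ha.trans hbj.symm) hab)
          | simp [ha, hbj]
    · intro _
      rw [support_E2 hab]
      refine ⟨⟨(1:ℕ), by simp [hadef]⟩, (Finset.range 4).image (fun j => 1 + j * 1),
        ⟨1, 1, le_refl 1, le_refl 1, by omega, rfl⟩, ?_⟩
      rw [Finset.image_insert, Finset.image_singleton]
      show ({(0:ℕ)+1, 1+1} : Finset ℕ) ⊆ _
      decide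
  have hco : coeff (E a + E b) (Pker K n) = 1 := by
    rw [coeff_Pker hab]
    show ((KC 0 1 + KC 1 0 : ℤ) : K) = 1
    rw [KC_of_le (i := 1) (j := 0) (by omega),
      show KC 0 1 = 1 by rw [KC]; norm_num [s3_one]]
    norm_num
  exact hb _ (MvPolynomial.mem_support_iff.mpr (by rw [hco]; exact one_ne_zero)) hg

lemma ell_homogeneous : (∑ j : Fin n, X j : MvPolynomial (Fin n) K).IsHomogeneous 1 :=
  IsHomogeneous.sum _ _ _ (fun j _ => isHomogeneous_X _ _)

lemma degree_E3 {a b c : Fin n} : (E a + E b + E c).degree = 3 := by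
  rw [Finsupp.degree_eq_weight_one, map_add, map_add]
  simp [E, Finsupp.weight_apply, Finsupp.sum_single_index]

end Assembly
end VDW

set_option synthInstance.maxHeartbeats 4000000 in
set_option maxHeartbeats 4000000 in
/-- Let `K` be a field and `n ≥ 7`.  For `ℓ = x_1 + ⋯ + x_n`, the
multiplication map `×ℓ : A(vdw(n,3))_2 → A(vdw(n,3))_3` does not have maximal
rank, i.e. `A(vdw(n,3))` fails the WLP in degree two. -/
theorem vdw_k_eq_three_fails_degree_two (K : Type*) [Field K] (n : ℕ) (hn : 7 ≤ n) :
    ¬ vdwMaxRank K n 3 (vdwEll K n 3) 2 3 := by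
  classical
  intro hmax
  rw [vdwMaxRank] at hmax
  set f := LinearMap.mulLeft K (vdwEll K n 3) with hf
  set p2 := vdwPiece K n 3 2 with hp2
  set p3 := vdwPiece K n 3 3 with hp3
  set Im := Submodule.map f p2 with hImdef
  have hmk : ∀ q : MvPolynomial (Fin n) K,
      (Ideal.Quotient.mkₐ K (vdwIdeal K n 3)).toLinearMap q
        = Ideal.Quotient.mk (vdwIdeal K n 3) q := fun q => rfl
  have hfmk : ∀ q : MvPolynomial (Fin n) K,
      f (Ideal.Quotient.mk (vdwIdeal K n 3) q)
        = Ideal.Quotient.mk (vdwIdeal K n 3) ((∑ j : Fin n, X j) * q) := by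
    intro q
    rw [hf, LinearMap.mulLeft_apply, vdwEll, ← map_mul]
  -- the image is contained in the degree-3 piece
  have him_le : Im ≤ p3 := by
    rintro x hx
    obtain ⟨y, hy, rfl⟩ := Submodule.mem_map.mp hx
    obtain ⟨h, hh, rfl⟩ := Submodule.mem_map.mp hy
    rw [hp3, vdwPiece]
    refine Submodule.mem_map.mpr ⟨(∑ j : Fin n, X j) * h, ?_, ?_⟩
    · exact (mem_homogeneousSubmodule _ _).mpr
        (VDW.ell_homogeneous.mul ((mem_homogeneousSubmodule _ _).mp hh))
    · rw [hmk, hmk, ← hfmk]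
  -- the witness monomial x₁x₂x₃
  set m0 : MvPolynomial (Fin n) K :=
    monomial (VDW.T3 hn 0 1 2 (by omega) (by omega) (by omega)) (1:K) with hm0
  have hw3mem : Ideal.Quotient.mk (vdwIdeal K n 3) m0 ∈ p3 := by
    rw [hp3, vdwPiece]
    refine Submodule.mem_map.mpr ⟨m0, ?_, hmk m0⟩
    refine (mem_homogeneousSubmodule _ _).mpr (isHomogeneous_monomial _ ?_)
    rw [VDW.T3]
    exact VDW.degree_E3
  have hw3nim : Ideal.Quotient.mk (vdwIdeal K n 3) m0 ∉ Im := by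
    intro hmem
    obtain ⟨y, hy, hxy⟩ := Submodule.mem_map.mp hmem
    obtain ⟨h, hh, rfl⟩ := Submodule.mem_map.mp hy
    rw [hmk, hfmk] at hxy
    have hsub := Ideal.Quotient.eq.mp hxy
    have hphi := VDW.phiW_bad hn _ (VDW.vdwIdeal_le_badIdeal hsub)
    rw [map_sub, VDW.phiW_ell_mul hn h, hm0, VDW.phiW_detect hn] at hphi
    norm_num at hphi
  -- strict inequality on the target side
  have hlt3 : Module.finrank K Im < Module.finrank K p3 := by
    refine Submodule.finrank_lt_finrank_of_lt (lt_of_le_of_ne him_le ?_)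
    intro he
    rw [he] at hw3nim
    exact hw3nim hw3mem
  -- the kernel element
  have hz2 : Ideal.Quotient.mk (vdwIdeal K n 3) (VDW.Pker K n) ∈ p2 := by
    rw [hp2, vdwPiece]
    exact Submodule.mem_map.mpr ⟨VDW.Pker K n,
      (mem_homogeneousSubmodule _ _).mpr VDW.Pker_isHomogeneous, hmk _⟩
  set g := f.domRestrict p2 with hg
  have hrange : LinearMap.range g = Im := by
    rw [hg, LinearMap.range_domRestrict]
  have hgz : g ⟨_, hz2⟩ = 0 := by
    rw [hg, LinearMap.domRestrict_apply, hfmk]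
    rw [Ideal.Quotient.eq_zero_iff_mem]
    exact VDW.badIdeal_le_vdwIdeal (VDW.ell_mul_Pker_mem_bad)
  have hzne : (⟨_, hz2⟩ : p2) ≠ 0 := by
    intro he
    have : Ideal.Quotient.mk (vdwIdeal K n 3) (VDW.Pker K n) = 0 := by
      exact congrArg Subtype.val he
    exact VDW.Pker_not_mem hn (Ideal.Quotient.eq_zero_iff_mem.mp this)
  have hker : 0 < Module.finrank K (LinearMap.ker g) := by
    refine (Module.finrank_pos_iff (R := K) (M := LinearMap.ker g)).mpr ?_
    exact ⟨⟨⟨_, LinearMap.mem_ker.mpr hgz⟩, 0, by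
      intro he
      exact hzne (congrArg Subtype.val he)⟩⟩
  have hrn := LinearMap.finrank_range_add_finrank_ker g
  rw [hrange] at hrn
  have hlt2 : Module.finrank K Im < Module.finrank K p2 := by omega
  rcases min_choice (Module.finrank K p2) (Module.finrank K p3) with hmin | hmin <;>
    rw [hmin] at hmax <;> omega
end

section
/- Let n > k ≥ 3 be integers. The van der Waerden complex vdw(n,k) is a pseudo-manifold if and only if n/2 ≤ k < n. Moreover, whenever vdw(n,k) with k ≥ 3 is a pseudo-manifold, it is a pseudo-manifold with boundary. -/
open MvPolynomial

-- AUX (already checked) --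

def ap (i a k : ℕ) : Finset ℕ := (Finset.range (k+1)).image (fun j => i + j * a)

lemma mem_ap {i a k x : ℕ} : x ∈ ap i a k ↔ ∃ j, j ≤ k ∧ x = i + j * a := by
  simp only [ap, Finset.mem_image, Finset.mem_range, Nat.lt_succ_iff]
  exact ⟨fun ⟨j,hj,h⟩ => ⟨j,hj,h.symm⟩, fun ⟨j,hj,h⟩ => ⟨j,hj,h.symm⟩⟩

lemma ap_card {i a k : ℕ} (ha : 1 ≤ a) : (ap i a k).card = k + 1 := by
  have hinj : Function.Injective (fun j => i + j * a) := by
    intro x y hxy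
    simp only at hxy
    have h := Nat.add_left_cancel hxy
    exact Nat.eq_of_mul_eq_mul_right ha h
  rw [ap, Finset.card_image_of_injective _ hinj, Finset.card_range]

lemma ap_le {i a k x : ℕ} (hx : x ∈ ap i a k) : i ≤ x ∧ x ≤ i + k * a := by
  obtain ⟨j, hj, rfl⟩ := mem_ap.mp hx
  have h1 : j * a ≤ k * a := Nat.mul_le_mul hj (le_refl a)
  exact ⟨Nat.le_add_right _ _, Nat.add_le_add_left h1 i⟩

lemma ap_dvd_sub {i a k x y : ℕ} (hx : x ∈ ap i a k) (hy : y ∈ ap i a k) :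
    a ∣ y - x := by
  obtain ⟨j, hj, rfl⟩ := mem_ap.mp hx
  obtain ⟨j', hj', rfl⟩ := mem_ap.mp hy
  rcases le_total j j' with h | h
  · exact ⟨j' - j, by rw [Nat.mul_comm a, tsub_mul, Nat.add_sub_add_left]⟩
  · have h1 : j' * a ≤ j * a := Nat.mul_le_mul h (le_refl a)
    have h0 : i + j' * a - (i + j * a) = 0 := by
      rw [Nat.add_sub_add_left]; omega
    rw [h0]; exact dvd_zero a

lemma ap_subset_facts {i a k : ℕ} (ha : 1 ≤ a) {S : Finset ℕ} (hsub : S ⊆ ap i a k)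
    (hne : S.Nonempty) :
    a ∣ (S.max' hne - S.min' hne) ∧ (S.max' hne - S.min' hne) ≤ k * a ∧
      S.card ≤ (S.max' hne - S.min' hne) / a + 1 := by
  set m := S.min' hne with hm
  set M := S.max' hne with hM
  have hdvd : ∀ x ∈ S, a ∣ x - m := fun x hx =>
    ap_dvd_sub (hsub (S.min'_mem hne)) (hsub hx)
  refine ⟨hdvd M (S.max'_mem hne), ?_, ?_⟩
  · have h1 := ap_le (hsub (S.min'_mem hne))
    have h2 := ap_le (hsub (S.max'_mem hne))
    omega
  · have hinj : Set.InjOn (fun x => (x - m)/a) S := by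
      intro x hx y hy hxy
      obtain ⟨cx, hcx⟩ := hdvd x hx
      obtain ⟨cy, hcy⟩ := hdvd y hy
      have hx' := S.min'_le x hx
      have hy' := S.min'_le y hy
      simp only at hxy
      rw [hcx, hcy, Nat.mul_div_cancel_left _ (by omega : 0 < a),
        Nat.mul_div_cancel_left _ (by omega : 0 < a)] at hxy
      subst hxy
      omega
    have hc := Finset.card_image_of_injOn hinj
    have hsub2 : S.image (fun x => (x - m)/a) ⊆ Finset.range ((M - m)/a + 1) := by
      intro y hy
      simp only [Finset.mem_image] at hy
      obtain ⟨x, hx, rfl⟩ := hy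
      simp only [Finset.mem_range, Nat.lt_succ_iff]
      exact Nat.div_le_div_right (by have := S.le_max' x hx; omega)
    calc S.card = (S.image (fun x => (x - m)/a)).card := hc.symm
      _ ≤ (Finset.range ((M - m)/a + 1)).card := Finset.card_le_card hsub2
      _ = (M - m)/a + 1 := Finset.card_range _

lemma ap_subset_full {i a k : ℕ} (ha : 1 ≤ a) {S : Finset ℕ} (hsub : S ⊆ ap i a k)
    (hne : S.Nonempty) (hcard : (S.max' hne - S.min' hne)/a + 1 ≤ S.card)
    {t : ℕ} (ht : t * a ≤ S.max' hne - S.min' hne) :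
    S.min' hne + t * a ∈ S := by
  set m := S.min' hne with hm
  set M := S.max' hne with hM
  have hdvd : ∀ x ∈ S, a ∣ x - m := fun x hx =>
    ap_dvd_sub (hsub (S.min'_mem hne)) (hsub hx)
  have hinj : Set.InjOn (fun x => (x - m)/a) S := by
    intro x hx y hy hxy
    obtain ⟨cx, hcx⟩ := hdvd x hx
    obtain ⟨cy, hcy⟩ := hdvd y hy
    have hx' := S.min'_le x hx
    have hy' := S.min'_le y hy
    simp only at hxy
    rw [hcx, hcy, Nat.mul_div_cancel_left _ (by omega : 0 < a),
      Nat.mul_div_cancel_left _ (by omega : 0 < a)] at hxy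
    subst hxy
    omega
  have hc := Finset.card_image_of_injOn hinj
  have hsub2 : S.image (fun x => (x - m)/a) ⊆ Finset.range ((M - m)/a + 1) := by
    intro y hy
    simp only [Finset.mem_image] at hy
    obtain ⟨x, hx, rfl⟩ := hy
    simp only [Finset.mem_range, Nat.lt_succ_iff]
    exact Nat.div_le_div_right (by have := S.le_max' x hx; omega)
  have heq : S.image (fun x => (x - m)/a) = Finset.range ((M - m)/a + 1) :=
    Finset.eq_of_subset_of_card_le hsub2 (by rw [hc, Finset.card_range]; exact hcard)
  have htmem : t ∈ Finset.range ((M - m)/a + 1) := by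
    simp only [Finset.mem_range, Nat.lt_succ_iff]
    exact (Nat.le_div_iff_mul_le (by omega : 0 < a)).mpr ht
  rw [← heq, Finset.mem_image] at htmem
  obtain ⟨x, hx, hxt⟩ := htmem
  obtain ⟨cx, hcx⟩ := hdvd x hx
  rw [hcx, Nat.mul_div_cancel_left _ (by omega : 0 < a)] at hxt
  subst hxt
  have hx' := S.min'_le x hx
  have hcx' : x = m + cx * a := by rw [Nat.mul_comm]; omega
  rwa [← hcx']

lemma ap_inter_diff {i a i' a' k : ℕ} (hk : 3 ≤ k) (ha : 1 ≤ a) (ha' : 1 ≤ a')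
    (hle : a ≤ a') (hcard : (ap i a k ∩ ap i' a' k).card = k) : a = a' := by
  by_contra hne
  have hlt : a < a' := lt_of_le_of_ne hle hne
  set S := ap i a k ∩ ap i' a' k with hSdef
  have hne' : S.Nonempty := Finset.card_pos.mp (by omega)
  have hsub1 : S ⊆ ap i a k := Finset.inter_subset_left
  have hsub2 : S ⊆ ap i' a' k := Finset.inter_subset_right
  obtain ⟨hd1, hb1, hc1⟩ := ap_subset_facts ha hsub1 hne'
  obtain ⟨hd2, hb2, hc2⟩ := ap_subset_facts ha' hsub2 hne'
  set m := S.min' hne' with hm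
  set M := S.max' hne' with hM
  obtain ⟨c, hc⟩ := hd1
  obtain ⟨c', hc'⟩ := hd2
  rw [hc, Nat.mul_div_cancel_left _ (by omega : 0 < a)] at hc1
  rw [hc', Nat.mul_div_cancel_left _ (by omega : 0 < a')] at hc2
  -- c ≤ k
  have hck : c ≤ k := by
    have h1 : a * c ≤ a * k := by rw [← hc, Nat.mul_comm a k]; exact hb1
    exact Nat.le_of_mul_le_mul_left h1 (by omega)
  have hck' : c' ≤ k := by
    have h1 : a' * c' ≤ a' * k := by rw [← hc', Nat.mul_comm a' k]; exact hb2
    exact Nat.le_of_mul_le_mul_left h1 (by omega)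
  -- a * c = a' * c'
  have hacc : a * c = a' * c' := by rw [← hc, ← hc']
  -- c' < c
  have hcc : c' < c := by
    by_contra hcc
    push_neg at hcc
    have h1 : a * c < a' * c' := by
      calc a * c < a' * c := by
            exact Nat.mul_lt_mul_of_lt_of_le hlt (le_refl c) (by omega)
        _ ≤ a' * c' := Nat.mul_le_mul_left a' hcc
    omega
  -- with hc1 : k ≤ c + 1 and hc2 : k ≤ c' + 1 (from hcard = k)
  have hcardS : S.card = k := hcard
  have hcge : k ≤ c + 1 := by omega
  have hcge' : k ≤ c' + 1 := by omega
  have hc'k : c' + 1 = k := by omega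
  have hckk : c = k := by omega
  -- fullness w.r.t. a'
  have hfull : (M - m)/a' + 1 ≤ S.card := by
    rw [hc', Nat.mul_div_cancel_left _ (by omega : 0 < a')]
    omega
  have ht : 1 * a' ≤ M - m := by
    rw [hc', Nat.one_mul]
    have : a' * 1 ≤ a' * c' := Nat.mul_le_mul_left a' (by omega)
    omega
  have hmem := ap_subset_full ha' hsub2 hne' hfull ht
  -- m + a' ∈ S ⊆ ap i a k, so a ∣ a'
  obtain ⟨q, hq⟩ : a ∣ a' := by
    have hd := ap_dvd_sub (hsub1 (S.min'_mem hne')) (hsub1 hmem)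
    simpa using hd
  have hq2 : 2 ≤ q := by
    rcases Nat.lt_or_ge q 2 with h | h
    · interval_cases q <;> omega
    · exact h
  -- a * c = a' * c' = a * q * c', cancel a: c = q * c'
  have hcq : c = q * c' := by
    have h1 : a * c = a * (q * c') := by
      rw [hacc, hq, Nat.mul_assoc]
    exact Nat.eq_of_mul_eq_mul_left (by omega) h1
  have h2 : 2 * c' ≤ q * c' := Nat.mul_le_mul_right c' hq2
  omega

lemma ap_inter_diff' {i a i' a' k : ℕ} (hk : 3 ≤ k) (ha : 1 ≤ a) (ha' : 1 ≤ a')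
    (hcard : (ap i a k ∩ ap i' a' k).card = k) : a = a' := by
  rcases le_total a a' with h | h
  · exact ap_inter_diff hk ha ha' h hcard
  · exact (ap_inter_diff hk ha' ha h (by rwa [Finset.inter_comm])).symm

lemma ap_eq_ap {i a i' a' k : ℕ} (hk : 1 ≤ k) (h : ap i a k = ap i' a' k) : a = a' := by
  have h1 : i ∈ ap i' a' k := h ▸ mem_ap.mpr ⟨0, by omega, by simp⟩
  have h1' : i' ∈ ap i a k := h.symm ▸ mem_ap.mpr ⟨0, by omega, by simp⟩
  have h2 : i + k * a ∈ ap i' a' k := h ▸ mem_ap.mpr ⟨k, le_refl k, by rw [Nat.mul_comm]⟩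
  have h2' : i' + k * a' ∈ ap i a k := h.symm ▸ mem_ap.mpr ⟨k, le_refl k, by rw [Nat.mul_comm]⟩
  have b1 := ap_le h1
  have b1' := ap_le h1'
  have b2 := ap_le h2
  have b2' := ap_le h2'
  have hka : k * a = k * a' := by omega
  exact Nat.eq_of_mul_eq_mul_left (by omega) hka

lemma ap_one (i k : ℕ) : ap i 1 k = Finset.Icc i (i + k) := by
  ext x
  simp only [mem_ap, Finset.mem_Icc, Nat.mul_one]
  constructor
  · rintro ⟨j, hj, rfl⟩; omega
  · intro h; exact ⟨x - i, by omega, by omega⟩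

lemma ap_adj (t k : ℕ) : (ap t 1 k ∩ ap (t+1) 1 k).card = k := by
  rw [ap_one, ap_one]
  have h : Finset.Icc t (t+k) ∩ Finset.Icc (t+1) (t+1+k) = Finset.Icc (t+1) (t+k) := by
    ext x
    simp only [Finset.mem_inter, Finset.mem_Icc]
    omega
  rw [h, Nat.card_Icc]
  omega

-- vdw-specific --

lemma vdwFacet_ap {n k i a : ℕ} (hi : 1 ≤ i) (ha : 1 ≤ a) (h : i + k * a ≤ n) :
    vdwFacet n k (ap i a k) := ⟨i, a, hi, ha, h, rfl⟩

lemma facet_of_le {n k : ℕ} {F : Finset ℕ} (hk : 1 ≤ k) (hn : n ≤ 2*k)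
    (hF : vdwFacet n k F) : ∃ i, 1 ≤ i ∧ i + k ≤ n ∧ F = ap i 1 k := by
  obtain ⟨i, a, hi, ha, hle, rfl⟩ := hF
  have ha1 : a = 1 := by
    by_contra h
    have h2 : 2 ≤ a := by omega
    have h3 : k * 2 ≤ k * a := Nat.mul_le_mul_left k h2
    omega
  subst ha1
  exact ⟨i, hi, by omega, rfl⟩

lemma link_le_two {n k : ℕ} (hk : 3 ≤ k) (hn : n ≤ 2*k) (S : Finset ℕ)
    (hcard : S.card = k) (hne : S.Nonempty) :
    Set.ncard {F : Finset ℕ | vdwFacet n k F ∧ S ⊆ F} ≤ 2 := by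
  set m := S.min' hne with hm
  set M := S.max' hne with hM
  have hsub : {F : Finset ℕ | vdwFacet n k F ∧ S ⊆ F} ⊆
      {Finset.Icc (m-1) (m-1+k), Finset.Icc m (m+k)} := by
    rintro F ⟨hF, hSF⟩
    obtain ⟨i, hi, hikn, rfl⟩ := facet_of_le (by omega) hn hF
    rw [ap_one]
    have hmm := hSF (S.min'_mem hne)
    have hMM := hSF (S.max'_mem hne)
    rw [ap_one, Finset.mem_Icc] at hmm hMM
    have hIcc : S ⊆ Finset.Icc m M := by
      intro x hx
      rw [Finset.mem_Icc]
      exact ⟨S.min'_le x hx, S.le_max' x hx⟩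
    have hcard2 : k ≤ M + 1 - m := by
      have := Finset.card_le_card hIcc
      rw [Nat.card_Icc] at this
      omega
    have : i = m ∨ i + 1 = m := by omega
    rcases this with h | h
    · right; rw [h]; exact rfl
    · left
      have h2 : m - 1 = i := by omega
      rw [h2]
  calc Set.ncard {F : Finset ℕ | vdwFacet n k F ∧ S ⊆ F}
      ≤ Set.ncard {Finset.Icc (m-1) (m-1+k), Finset.Icc m (m+k)} :=
        Set.ncard_le_ncard hsub ((Set.finite_singleton _).insert _)
    _ ≤ 2 := le_trans (Set.ncard_insert_le _ _) (by simp)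

lemma pm_of_le {n k : ℕ} (hk : 3 ≤ k) (hkn : k < n) (hn : n ≤ 2*k) :
    vdwIsPseudoManifold n k := by
  refine ⟨?_, ?_, ?_⟩
  · rintro F ⟨i, a, hi, ha, hle, rfl⟩
    exact ap_card ha
  · intro S hS hcard
    exact link_le_two hk hn S hcard hS.1
  · intro F F' hF hF'
    obtain ⟨i, hi, hik, rfl⟩ := facet_of_le (by omega) hn hF
    obtain ⟨i', hi', hik', rfl⟩ := facet_of_le (by omega) hn hF'
    rcases le_total i i' with h | h
    · refine ⟨i' - i, fun j => ap (i + min j (i' - i)) 1 k, ?_, ?_, ?_, ?_⟩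
      · simp
      · simp only [min_self]
        have : i + (i' - i) = i' := by omega
        rw [this]
      · intro j hj
        exact vdwFacet_ap (by omega) le_rfl (by omega)
      · intro j hj
        show (ap (i + min j (i' - i)) 1 k ∩ ap (i + min (j+1) (i' - i)) 1 k).card = k
        have e1 : min j (i' - i) = j := by omega
        have e2 : min (j+1) (i' - i) = j + 1 := by omega
        rw [e1, e2]
        have e3 : i + (j + 1) = (i + j) + 1 := by omega
        rw [e3]
        exact ap_adj _ k
    · refine ⟨i - i', fun j => ap (i - min j (i - i')) 1 k, ?_, ?_, ?_, ?_⟩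
      · simp
      · simp only [min_self]
        have : i - (i - i') = i' := by omega
        rw [this]
      · intro j hj
        exact vdwFacet_ap (by omega) le_rfl (by omega)
      · intro j hj
        show (ap (i - min j (i - i')) 1 k ∩ ap (i - min (j+1) (i - i')) 1 k).card = k
        have e1 : min j (i - i') = j := by omega
        have e2 : min (j+1) (i - i') = j + 1 := by omega
        rw [e1, e2]
        have e3 : i - j = (i - (j + 1)) + 1 := by omega
        rw [e3, Finset.inter_comm]
        exact ap_adj _ k

lemma le_of_pm {n k : ℕ} (hk : 3 ≤ k) (hkn : k < n) (hpm : vdwIsPseudoManifold n k) :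
    n ≤ 2*k := by
  by_contra hcon
  push_neg at hcon
  obtain ⟨-, -, hconn⟩ := hpm
  have hF : vdwFacet n k (ap 1 1 k) := vdwFacet_ap le_rfl le_rfl (by omega)
  have hF' : vdwFacet n k (ap 1 2 k) := vdwFacet_ap le_rfl (by omega) (by omega)
  obtain ⟨m, G, hG0, hGm, hfac, hint⟩ := hconn _ _ hF hF'
  have key : ∀ j, j ≤ m → ∀ i₀ a₀, 1 ≤ a₀ → G j = ap i₀ a₀ k → a₀ = 1 := by
    intro j
    induction j with
    | zero =>
      intro _ i₀ a₀ ha₀ hG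
      exact (ap_eq_ap (by omega : 1 ≤ k) (hG0.symm.trans hG)).symm
    | succ j ih =>
      intro hj i₀ a₀ ha₀ hG
      obtain ⟨i₁, a₁, hi₁, ha₁, hle₁, hG₁⟩ := hfac j (by omega)
      have e1 : a₁ = 1 := ih (by omega) i₁ a₁ ha₁ hG₁
      have hcardk := hint j (by omega)
      rw [hG₁, hG] at hcardk
      have := ap_inter_diff' hk ha₁ ha₀ hcardk
      omega
  have h2 : (2:ℕ) = 1 := key m le_rfl 1 2 (by omega) hGm
  omega

lemma boundary_of {n k : ℕ} (hk : 3 ≤ k) (hkn : k < n) (hn : n ≤ 2*k) :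
    vdwHasBoundary n k := by
  refine ⟨Finset.Icc 1 k, ⟨⟨1, Finset.mem_Icc.mpr (by omega)⟩,
    ap 1 1 k, vdwFacet_ap le_rfl le_rfl (by omega), ?_⟩, ?_, ?_⟩
  · rw [ap_one]
    exact Finset.Icc_subset_Icc le_rfl (by omega)
  · rw [Nat.card_Icc]; omega
  · have hset : {F : Finset ℕ | vdwFacet n k F ∧ Finset.Icc 1 k ⊆ F} = {ap 1 1 k} := by
      ext F
      simp only [Set.mem_setOf_eq, Set.mem_singleton_iff]
      constructor
      · rintro ⟨hF, hsub⟩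
        obtain ⟨i, hi, hik, rfl⟩ := facet_of_le (by omega) hn hF
        have h1 : (1:ℕ) ∈ ap i 1 k := hsub (Finset.mem_Icc.mpr (by omega))
        rw [ap_one, Finset.mem_Icc] at h1
        have : i = 1 := by omega
        rw [this]
      · rintro rfl
        refine ⟨vdwFacet_ap le_rfl le_rfl (by omega), ?_⟩
        rw [ap_one]
        exact Finset.Icc_subset_Icc le_rfl (by omega)
    rw [hset, Set.ncard_singleton]


/-- Let `n > k ≥ 3`.  Then `vdw(n,k)` is a pseudo-manifold if and
only if `n/2 ≤ k < n`; moreover, whenever it is a pseudo-manifold it is a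
pseudo-manifold with boundary. -/
theorem vdw_pseudomanifold_iff (n k : ℕ) (hk : 3 ≤ k) (hkn : k < n) :
    (vdwIsPseudoManifold n k ↔ n ≤ 2 * k) ∧
    (vdwIsPseudoManifold n k → vdwHasBoundary n k) := by
  refine ⟨⟨fun h => le_of_pm hk hkn h, fun h => pm_of_le hk hkn h⟩, fun h =>
    boundary_of hk hkn (le_of_pm hk hkn h)⟩
end

section
/- For every integer n ≥ 3, the van der Waerden complex vdw(n,2) is a pseudo-manifold if and only if n ≤ 6. -/
open MvPolynomial

/-! ### Auxiliary machinery for the pseudo-manifold theorem -/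

/-- The finite set of all facets of `vdw(n,2)`. -/
def vdwFacetFinset (n : ℕ) : Finset (Finset ℕ) :=
  (((Finset.Icc 1 n) ×ˢ (Finset.Icc 1 n)).filter (fun p => p.1 + 2 * p.2 ≤ n)).image
    (fun p => (Finset.range 3).image (fun j => p.1 + j * p.2))

lemma vdwFacet_iff (n : ℕ) (F : Finset ℕ) : vdwFacet n 2 F ↔ F ∈ vdwFacetFinset n := by
  constructor
  · rintro ⟨i, a, hi, ha, hle, rfl⟩
    refine Finset.mem_image.2 ⟨(i, a), Finset.mem_filter.2 ⟨Finset.mem_product.2 ⟨?_, ?_⟩, ?_⟩, rfl⟩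
    · exact Finset.mem_Icc.2 ⟨hi, by omega⟩
    · exact Finset.mem_Icc.2 ⟨ha, by omega⟩
    · exact hle
  · intro h
    obtain ⟨⟨i, a⟩, hp, rfl⟩ := Finset.mem_image.1 h
    obtain ⟨hprod, hle⟩ := Finset.mem_filter.1 hp
    obtain ⟨h1, h2⟩ := Finset.mem_product.1 hprod
    exact ⟨i, a, (Finset.mem_Icc.1 h1).1, (Finset.mem_Icc.1 h2).1, hle, rfl⟩

lemma vdwFacet_card (n k : ℕ) (F : Finset ℕ) (h : vdwFacet n k F) : F.card = k + 1 := by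
  obtain ⟨i, a, hi, ha, hle, rfl⟩ := h
  rw [Finset.card_image_of_injOn, Finset.card_range]
  intro x _ y _ hxy
  have hxy' : i + x * a = i + y * a := hxy
  have : x * a = y * a := by omega
  exact Nat.eq_of_mul_eq_mul_right ha this

lemma vdwFacet_subset (n : ℕ) (F : Finset ℕ) (h : vdwFacet n 2 F) : F ⊆ Finset.Icc 1 n := by
  obtain ⟨i, a, hi, ha, hle, rfl⟩ := h
  intro x hx
  simp only [Finset.mem_image, Finset.mem_range] at hx
  obtain ⟨j, hj, rfl⟩ := hx
  have : j * a ≤ 2 * a := Nat.mul_le_mul_right a (by omega)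
  simp only [Finset.mem_Icc]
  omega

lemma vdwFacet_mono {m n : ℕ} (h : m ≤ n) {k : ℕ} {F : Finset ℕ} (hF : vdwFacet m k F) :
    vdwFacet n k F := by
  obtain ⟨i, a, hi, ha, hle, rfl⟩ := hF
  exact ⟨i, a, hi, ha, by omega, rfl⟩

/-- Connectivity relation between facets. -/
def vdwReach (n k : ℕ) (F F' : Finset ℕ) : Prop :=
  ∃ m : ℕ, ∃ G : ℕ → Finset ℕ, G 0 = F ∧ G m = F' ∧
    (∀ j ≤ m, vdwFacet n k (G j)) ∧ (∀ j < m, (G j ∩ G (j + 1)).card = k)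

lemma vdwReach.refl {n k : ℕ} {F : Finset ℕ} (hF : vdwFacet n k F) : vdwReach n k F F :=
  ⟨0, fun _ => F, rfl, rfl, fun _ _ => hF, fun j hj => absurd hj (by omega)⟩

lemma vdwReach.single {n k : ℕ} {F F' : Finset ℕ} (hF : vdwFacet n k F)
    (hF' : vdwFacet n k F') (h : (F ∩ F').card = k) : vdwReach n k F F' := by
  refine ⟨1, fun j => if j = 0 then F else F', by simp, by simp, ?_, ?_⟩
  · intro j hj
    interval_cases j
    · simpa using hF
    · simpa using hF'
  · intro j hj
    have hj0 : j = 0 := by omega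
    subst hj0
    simpa using h

lemma vdwReach.symm {n k : ℕ} {F F' : Finset ℕ} (h : vdwReach n k F F') :
    vdwReach n k F' F := by
  obtain ⟨m, G, h0, hm, hfac, hstep⟩ := h
  refine ⟨m, fun j => G (m - j), by simpa using hm, by simpa using h0,
    fun j hj => hfac _ (by omega), fun j hj => ?_⟩
  have h := hstep (m - (j + 1)) (by omega)
  rw [show m - (j + 1) + 1 = m - j by omega] at h
  rw [Finset.inter_comm]
  exact h

lemma vdwReach.trans {n k : ℕ} {F F' F'' : Finset ℕ} (h : vdwReach n k F F')
    (h' : vdwReach n k F' F'') : vdwReach n k F F'' := by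
  obtain ⟨m, G, h0, hm, hfac, hstep⟩ := h
  obtain ⟨m', G', h'0, h'm, h'fac, h'step⟩ := h'
  refine ⟨m + m', fun j => if j < m then G j else G' (j - m), ?_, ?_, ?_, ?_⟩
  · by_cases hm0 : 0 < m
    · simp [hm0, h0]
    · have hm' : m = 0 := by omega
      subst hm'
      simp only [if_neg hm0, Nat.sub_zero]
      rw [h'0, ← hm, h0]
  · have : ¬ (m + m' < m) := by omega
    simp [this, h'm]
  · intro j hj
    by_cases hjm : j < m
    · simpa [hjm] using hfac j (by omega)
    · simpa [hjm] using h'fac (j - m) (by omega)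
  · intro j hj
    rcases lt_trichotomy (j + 1) m with h1 | h1 | h1
    · have hjm : j < m := by omega
      simp only [if_pos hjm, if_pos h1]
      exact hstep j (by omega)
    · have hjm : j < m := by omega
      have h2 : ¬ (j + 1 < m) := by omega
      have e : G' (j + 1 - m) = G (j + 1) := by
        rw [show j + 1 - m = 0 by omega, h'0, ← hm, ← h1]
      simp only [if_pos hjm, if_neg h2, e]
      exact hstep j (by omega)
    · have hjm : ¬ (j < m) := by omega
      have h2 : ¬ (j + 1 < m) := by omega
      simp only [if_neg hjm, if_neg h2, show j + 1 - m = j - m + 1 by omega]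
      exact h'step (j - m) (by omega)

lemma vdwFacet_mk (n i a : ℕ) (F : Finset ℕ) (hi : 1 ≤ i) (ha : 1 ≤ a) (h : i + 2 * a ≤ n)
    (hF : F = (Finset.range 3).image (fun j => i + j * a)) : vdwFacet n 2 F :=
  ⟨i, a, hi, ha, h, hF⟩

/-- Every facet of `vdw(n,2)` with `n ≤ 6` is connected to the facet `{1,2,3}`. -/
lemma vdwReach_base (n : ℕ) (h6 : n ≤ 6) (F : Finset ℕ) (hF : vdwFacet n 2 F) :
    vdwReach n 2 F {1, 2, 3} := by
  have hF6 : F ∈ vdwFacetFinset 6 := (vdwFacet_iff 6 F).1 (vdwFacet_mono h6 hF)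
  have hfacets : vdwFacetFinset 6 =
      {{1,2,3}, {2,3,4}, {3,4,5}, {4,5,6}, {1,3,5}, {2,4,6}} := by decide
  rw [hfacets] at hF6
  have hbound : ∀ x ∈ F, x ≤ n := fun x hx => (Finset.mem_Icc.1 (vdwFacet_subset n F hF hx)).2
  fin_cases hF6
  · exact vdwReach.refl hF
  · have h4 : 4 ≤ n := hbound 4 (by decide)
    have hA : vdwFacet n 2 {1,2,3} := vdwFacet_mk n 1 1 _ le_rfl le_rfl (by omega) (by decide)
    exact vdwReach.single hF hA (by decide)
  · have h5 : 5 ≤ n := hbound 5 (by decide)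
    have hA : vdwFacet n 2 {1,2,3} := vdwFacet_mk n 1 1 _ le_rfl le_rfl (by omega) (by decide)
    have hB : vdwFacet n 2 {2,3,4} := vdwFacet_mk n 2 1 _ (by omega) le_rfl (by omega) (by decide)
    exact (vdwReach.single hF hB (by decide)).trans (vdwReach.single hB hA (by decide))
  · have h6' : 6 ≤ n := hbound 6 (by decide)
    have hA : vdwFacet n 2 {1,2,3} := vdwFacet_mk n 1 1 _ le_rfl le_rfl (by omega) (by decide)
    have hB : vdwFacet n 2 {2,3,4} := vdwFacet_mk n 2 1 _ (by omega) le_rfl (by omega) (by decide)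
    have hC : vdwFacet n 2 {3,4,5} := vdwFacet_mk n 3 1 _ (by omega) le_rfl (by omega) (by decide)
    exact ((vdwReach.single hF hC (by decide)).trans
      (vdwReach.single hC hB (by decide))).trans (vdwReach.single hB hA (by decide))
  · have h5 : 5 ≤ n := hbound 5 (by decide)
    have hA : vdwFacet n 2 {1,2,3} := vdwFacet_mk n 1 1 _ le_rfl le_rfl (by omega) (by decide)
    exact vdwReach.single hF hA (by decide)
  · have h6' : 6 ≤ n := hbound 6 (by decide)
    have hA : vdwFacet n 2 {1,2,3} := vdwFacet_mk n 1 1 _ le_rfl le_rfl (by omega) (by decide)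
    have hB : vdwFacet n 2 {2,3,4} := vdwFacet_mk n 2 1 _ (by omega) le_rfl (by omega) (by decide)
    exact (vdwReach.single hF hB (by decide)).trans (vdwReach.single hB hA (by decide))

lemma vdwSet_eq (n : ℕ) (S : Finset ℕ) :
    {F : Finset ℕ | vdwFacet n 2 F ∧ S ⊆ F} =
      ↑((vdwFacetFinset n).filter (fun F => S ⊆ F)) := by
  ext F
  simp [vdwFacet_iff, Finset.mem_filter]

/-- For every integer `n ≥ 3`, the complex `vdw(n,2)` is a
pseudo-manifold if and only if `n ≤ 6`. -/
theorem vdw_pseudomanifold_k_eq_two (n : ℕ) (hn : 3 ≤ n) :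
    vdwIsPseudoManifold n 2 ↔ n ≤ 6 := by
  constructor
  · intro hpm
    by_contra h6
    have h7 : 7 ≤ n := by omega
    obtain ⟨h1, h2, h3⟩ := hpm
    have hA : vdwFacet n 2 {1,3,5} := vdwFacet_mk n 1 2 _ le_rfl (by omega) (by omega) (by decide)
    have hB : vdwFacet n 2 {3,4,5} := vdwFacet_mk n 3 1 _ (by omega) le_rfl (by omega) (by decide)
    have hC : vdwFacet n 2 {3,5,7} := vdwFacet_mk n 3 2 _ (by omega) (by omega) (by omega) (by decide)
    have hface : vdwFace n 2 {3, 5} := ⟨⟨3, by decide⟩, {1,3,5}, hA, by decide⟩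
    have hle := h2 {3, 5} hface (by decide)
    rw [vdwSet_eq, Set.ncard_coe_finset] at hle
    have hsub : ({{1,3,5}, {3,4,5}, {3,5,7}} : Finset (Finset ℕ)) ⊆
        (vdwFacetFinset n).filter (fun F => ({3, 5} : Finset ℕ) ⊆ F) := by
      intro F hF
      fin_cases hF
      · exact Finset.mem_filter.2 ⟨(vdwFacet_iff n _).1 hA, by decide⟩
      · exact Finset.mem_filter.2 ⟨(vdwFacet_iff n _).1 hB, by decide⟩
      · exact Finset.mem_filter.2 ⟨(vdwFacet_iff n _).1 hC, by decide⟩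
    have hcard := Finset.card_le_card hsub
    have h3card : ({{1,3,5}, {3,4,5}, {3,5,7}} : Finset (Finset ℕ)).card = 3 := by decide
    omega
  · intro h6
    refine ⟨fun F hF => vdwFacet_card n 2 F hF, ?_, ?_⟩
    · intro S hS hcard
      obtain ⟨hne, G, hG, hSG⟩ := hS
      rw [vdwSet_eq, Set.ncard_coe_finset]
      have hSsub : S ∈ (Finset.Icc 1 n).powerset :=
        Finset.mem_powerset.2 (hSG.trans (vdwFacet_subset n G hG))
      clear hne hSG hG
      clear G
      interval_cases n
      · exact (by decide : ∀ S ∈ (Finset.Icc 1 3).powerset, S.card = 2 →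
          ((vdwFacetFinset 3).filter (fun F => S ⊆ F)).card ≤ 2) S hSsub hcard
      · exact (by decide : ∀ S ∈ (Finset.Icc 1 4).powerset, S.card = 2 →
          ((vdwFacetFinset 4).filter (fun F => S ⊆ F)).card ≤ 2) S hSsub hcard
      · exact (by decide : ∀ S ∈ (Finset.Icc 1 5).powerset, S.card = 2 →
          ((vdwFacetFinset 5).filter (fun F => S ⊆ F)).card ≤ 2) S hSsub hcard
      · exact (by decide : ∀ S ∈ (Finset.Icc 1 6).powerset, S.card = 2 →
          ((vdwFacetFinset 6).filter (fun F => S ⊆ F)).card ≤ 2) S hSsub hcard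
    · intro F F' hF hF'
      exact (vdwReach_base n h6 F hF).trans (vdwReach_base n h6 F' hF').symm
end

section
/- Let K be an infinite field and let n > k ≥ 3 be integers with n/2 ≤ k < n. Then A(vdw(n,k)) has the Weak Lefschetz Property in degree k; that is, for ℓ = x_1 + ⋯ + x_n the multiplication map ×ℓ : A(vdw(n,k))_k → A(vdw(n,k))_{k+1} has maximal rank. -/
open MvPolynomial

set_option maxHeartbeats 1000000
set_option synthInstance.maxHeartbeats 400000

section Aux

variable {n k : ℕ}

lemma vdw_facet_interval (hk : 1 ≤ k) (h2 : n ≤ 2 * k) {F : Finset ℕ}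
    (hF : vdwFacet n k F) : ∃ i, 1 ≤ i ∧ i + k ≤ n ∧ F = Finset.Ico i (i + k + 1) := by
  obtain ⟨i, a, h1, ha, hle, rfl⟩ := hF
  have ha1 : a = 1 := by
    by_contra h
    have h2a : 2 ≤ a := by omega
    have := Nat.mul_le_mul_left k h2a
    omega
  subst ha1
  refine ⟨i, h1, by omega, ?_⟩
  ext v
  simp only [Finset.mem_image, Finset.mem_range, Finset.mem_Ico, mul_one]
  constructor
  · rintro ⟨j, hj, rfl⟩; omega
  · rintro ⟨ha, hb⟩; exact ⟨v - i, by omega, by omega⟩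

lemma vdw_interval_facet {i : ℕ} (h1 : 1 ≤ i) (hle : i + k ≤ n) :
    vdwFacet n k (Finset.Ico i (i + k + 1)) := by
  refine ⟨i, 1, h1, le_refl 1, by omega, ?_⟩
  ext v
  simp only [Finset.mem_image, Finset.mem_range, Finset.mem_Ico, mul_one]
  constructor
  · rintro ⟨ha, hb⟩; exact ⟨v - i, by omega, by omega⟩
  · rintro ⟨j, hj, rfl⟩; omega

lemma vdw_face_card_interval (hk : 1 ≤ k) (h2 : n ≤ 2 * k) {S : Finset ℕ}
    (hS : vdwFace n k S) (hcard : S.card = k + 1) :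
    ∃ i, 1 ≤ i ∧ i + k ≤ n ∧ S = Finset.Ico i (i + k + 1) := by
  obtain ⟨-, G, hG, hsub⟩ := hS
  obtain ⟨i, h1, hle, rfl⟩ := vdw_facet_interval hk h2 hG
  have hcardG : (Finset.Ico i (i + k + 1)).card = k + 1 := by rw [Nat.card_Ico]; omega
  exact ⟨i, h1, hle, Finset.eq_of_subset_of_card_le hsub (by omega)⟩

lemma vdw_ext_char (hk : 1 ≤ k) (h2 : n ≤ 2 * k) {s v : ℕ}
    (hv : v ∉ Finset.Ico (s + 1) (s + k + 1))
    (hface : vdwFace n k (insert v (Finset.Ico (s + 1) (s + k + 1)))) :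
    (1 ≤ s ∧ v = s) ∨ v = s + k + 1 := by
  have hcard : (insert v (Finset.Ico (s + 1) (s + k + 1))).card = k + 1 := by
    rw [Finset.card_insert_of_notMem hv, Nat.card_Ico]; omega
  obtain ⟨i, h1, hle, heq⟩ := vdw_face_card_interval hk h2 hface hcard
  have hvmem : v ∈ Finset.Ico i (i + k + 1) := heq ▸ Finset.mem_insert_self v _
  have hsub : Finset.Ico (s + 1) (s + k + 1) ⊆ Finset.Ico i (i + k + 1) := by
    rw [← heq]; exact Finset.subset_insert _ _
  have hs1 : (s + 1 : ℕ) ∈ Finset.Ico i (i + k + 1) := hsub (by simp only [Finset.mem_Ico]; omega)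
  have hsk : (s + k : ℕ) ∈ Finset.Ico i (i + k + 1) := hsub (by simp only [Finset.mem_Ico]; omega)
  rw [Finset.mem_Ico] at hvmem hs1 hsk
  rw [Finset.mem_Ico] at hv
  omega

/-- The subset of `Fin n` with values in `[a, b)`. -/
def finIco (n a b : ℕ) : Finset (Fin n) :=
  Finset.univ.filter (fun j => a ≤ (j : ℕ) ∧ (j : ℕ) < b)

lemma mem_finIco {a b : ℕ} {j : Fin n} : j ∈ finIco n a b ↔ a ≤ (j : ℕ) ∧ (j : ℕ) < b := by
  simp [finIco]

lemma vmap_inj : Function.Injective (fun j : Fin n => (j : ℕ) + 1) := by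
  intro a b h
  simp only [add_left_inj] at h
  exact Fin.ext h

lemma image_finIco {a b : ℕ} (h : b ≤ n) :
    (finIco n a b).image (fun j : Fin n => (j : ℕ) + 1) = Finset.Ico (a + 1) (b + 1) := by
  ext v
  simp only [Finset.mem_image, mem_finIco, Finset.mem_Ico]
  constructor
  · rintro ⟨j, hj, rfl⟩; omega
  · rintro ⟨ha, hb⟩
    exact ⟨⟨v - 1, by omega⟩, by simp; omega⟩

lemma card_finIco {a b : ℕ} (h : b ≤ n) : (finIco n a b).card = b - a := by
  rw [← Finset.card_image_of_injective _ (vmap_inj (n := n)), image_finIco h, Nat.card_Ico]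
  omega

lemma good_char (hk : 1 ≤ k) (h2 : n ≤ 2 * k) {s : ℕ} (hs : s + k < n) (j : Fin n) :
    (j ∉ finIco n s (s + k) ∧
      vdwFace n k ((insert j (finIco n s (s + k))).image (fun j : Fin n => (j : ℕ) + 1)))
    ↔ ((1 ≤ s ∧ (j : ℕ) = s - 1) ∨ (j : ℕ) = s + k) := by
  have himg : (finIco n s (s + k)).image (fun j : Fin n => (j : ℕ) + 1)
      = Finset.Ico (s + 1) (s + k + 1) := by
    rw [image_finIco (by omega)]
  constructor
  · rintro ⟨hjS, hface⟩
    rw [Finset.image_insert, himg] at hface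
    rw [mem_finIco] at hjS
    have hv : (j : ℕ) + 1 ∉ Finset.Ico (s + 1) (s + k + 1) := by
      rw [Finset.mem_Ico]; omega
    have := vdw_ext_char hk h2 hv hface
    omega
  · intro hcase
    have hjS : j ∉ finIco n s (s + k) := by rw [mem_finIco]; omega
    refine ⟨hjS, ?_⟩
    rw [Finset.image_insert, himg]
    rcases hcase with ⟨h1, hjv⟩ | hjv
    · have hins : insert ((j : ℕ) + 1) (Finset.Ico (s + 1) (s + k + 1))
          = Finset.Ico s (s + k + 1) := by
        ext v
        simp only [Finset.mem_insert, Finset.mem_Ico]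
        omega
      rw [hins]
      exact ⟨Finset.nonempty_Ico.2 (by omega), _,
        vdw_interval_facet (by omega) (by omega), subset_rfl⟩
    · have hins : insert ((j : ℕ) + 1) (Finset.Ico (s + 1) (s + k + 1))
          = Finset.Ico (s + 1) (s + 1 + k + 1) := by
        ext v
        simp only [Finset.mem_insert, Finset.mem_Ico]
        omega
      rw [hins]
      exact ⟨Finset.nonempty_Ico.2 (by omega), _,
        vdw_interval_facet (by omega) (by omega), subset_rfl⟩

end Aux

section Alg

variable {K : Type*} [Field K] {n k : ℕ}

lemma prod_X_isHomogeneous (S : Finset (Fin n)) :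
    (∏ j ∈ S, X j : MvPolynomial (Fin n) K).IsHomogeneous S.card := by
  have := MvPolynomial.IsHomogeneous.prod S (fun j => (X j : MvPolynomial (Fin n) K))
    (fun _ => 1) (fun i _ => isHomogeneous_X K i)
  simpa using this

lemma sq_mem_piece {m : ℕ} (S : Finset (Fin n)) (hc : S.card = m) :
    Ideal.Quotient.mk (vdwIdeal K n k) (∏ j ∈ S, X j) ∈ vdwPiece K n k m := by
  refine ⟨∏ j ∈ S, X j, ?_, rfl⟩
  show (∏ j ∈ S, X j : MvPolynomial (Fin n) K).IsHomogeneous m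
  exact hc ▸ prod_X_isHomogeneous S

lemma key_mul (S T : Finset (Fin n))
    (hT : ∀ j : Fin n, j ∈ T ↔ (j ∉ S ∧
      vdwFace n k ((insert j S).image (fun j : Fin n => (j : ℕ) + 1)))) :
    Ideal.Quotient.mk (vdwIdeal K n k) ((∑ j : Fin n, X j) * ∏ j ∈ S, X j) =
      ∑ j ∈ T, Ideal.Quotient.mk (vdwIdeal K n k) (∏ j' ∈ insert j S, X j') := by
  rw [Finset.sum_mul, map_sum]
  rw [← Finset.sum_subset (Finset.subset_univ T) ?_]
  · refine Finset.sum_congr rfl fun j hj => ?_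
    rw [Finset.prod_insert ((hT j).1 hj).1]
  · intro j _ hjT
    rw [hT j] at hjT
    by_cases hjS : j ∈ S
    · rw [← Finset.mul_prod_erase S _ hjS, ← mul_assoc, ← pow_two]
      exact Ideal.Quotient.eq_zero_iff_mem.2
        (Ideal.mul_mem_right _ _ (Ideal.subset_span (Or.inr ⟨j, rfl⟩)))
    · have hnf : ¬ vdwFace n k ((insert j S).image (fun j : Fin n => (j : ℕ) + 1)) := by
        tauto
      rw [← Finset.prod_insert hjS]
      exact Ideal.Quotient.eq_zero_iff_mem.2
        (Ideal.subset_span (Or.inl ⟨insert j S, ⟨j, Finset.mem_insert_self j S⟩, hnf, rfl⟩))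

lemma mulLeft_ell_mk (q : MvPolynomial (Fin n) K) :
    LinearMap.mulLeft K (vdwEll K n k) (Ideal.Quotient.mk (vdwIdeal K n k) q)
      = Ideal.Quotient.mk (vdwIdeal K n k) ((∑ j : Fin n, X j) * q) := by
  rw [LinearMap.mulLeft_apply, vdwEll, ← map_mul]

lemma mem_image_aux (hk : 1 ≤ k) (h2 : n ≤ 2 * k) :
    ∀ s : ℕ, s + k < n →
      Ideal.Quotient.mk (vdwIdeal K n k) (∏ j ∈ finIco n s (s + k + 1), X j) ∈
        Submodule.map (LinearMap.mulLeft K (vdwEll K n k)) (vdwPiece K n k k) := by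
  intro s
  induction s with
  | zero =>
    intro hs
    have hT : ∀ j : Fin n, j ∈ ({(⟨k, by omega⟩ : Fin n)} : Finset (Fin n)) ↔
        (j ∉ finIco n 0 (0 + k) ∧
          vdwFace n k ((insert j (finIco n 0 (0 + k))).image
            (fun j : Fin n => (j : ℕ) + 1))) := by
      intro j
      rw [good_char hk h2 (by omega) j, Finset.mem_singleton, Fin.ext_iff]
      show (j : ℕ) = k ↔ _
      omega
    have hkey := key_mul (K := K) (finIco n 0 (0 + k)) _ hT
    rw [Finset.sum_singleton] at hkey
    have hins : insert (⟨k, by omega⟩ : Fin n) (finIco n 0 (0 + k))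
        = finIco n 0 (0 + k + 1) := by
      ext a
      rw [Finset.mem_insert, mem_finIco, mem_finIco, Fin.ext_iff]
      show (a : ℕ) = k ∨ _ ↔ _
      omega
    rw [hins] at hkey
    rw [← hkey, ← mulLeft_ell_mk]
    exact Submodule.mem_map_of_mem
      (sq_mem_piece _ (by rw [card_finIco (by omega)]; omega))
  | succ s ih =>
    intro hs
    have hT : ∀ j : Fin n,
        j ∈ ({(⟨s, by omega⟩ : Fin n), (⟨s + 1 + k, by omega⟩ : Fin n)} : Finset (Fin n)) ↔
        (j ∉ finIco n (s + 1) (s + 1 + k) ∧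
          vdwFace n k ((insert j (finIco n (s + 1) (s + 1 + k))).image
            (fun j : Fin n => (j : ℕ) + 1))) := by
      intro j
      rw [good_char hk h2 (by omega) j, Finset.mem_insert, Finset.mem_singleton,
        Fin.ext_iff, Fin.ext_iff]
      show (j : ℕ) = s ∨ (j : ℕ) = s + 1 + k ↔ _
      omega
    have hkey := key_mul (K := K) (finIco n (s + 1) (s + 1 + k)) _ hT
    rw [Finset.sum_insert (by
      rw [Finset.mem_singleton, Fin.ext_iff]
      show ¬ (s : ℕ) = s + 1 + k
      omega), Finset.sum_singleton] at hkey
    have hins1 : insert (⟨s, by omega⟩ : Fin n) (finIco n (s + 1) (s + 1 + k))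
        = finIco n s (s + k + 1) := by
      ext a
      rw [Finset.mem_insert, mem_finIco, mem_finIco, Fin.ext_iff]
      show (a : ℕ) = s ∨ _ ↔ _
      omega
    have hins2 : insert (⟨s + 1 + k, by omega⟩ : Fin n) (finIco n (s + 1) (s + 1 + k))
        = finIco n (s + 1) (s + 1 + k + 1) := by
      ext a
      rw [Finset.mem_insert, mem_finIco, mem_finIco, Fin.ext_iff]
      show (a : ℕ) = s + 1 + k ∨ _ ↔ _
      omega
    rw [hins1, hins2] at hkey
    have htarget : Ideal.Quotient.mk (vdwIdeal K n k) (∏ j ∈ finIco n (s + 1) (s + 1 + k + 1), X j)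
        = Ideal.Quotient.mk (vdwIdeal K n k)
            ((∑ j : Fin n, X j) * ∏ j ∈ finIco n (s + 1) (s + 1 + k), X j)
          - Ideal.Quotient.mk (vdwIdeal K n k) (∏ j ∈ finIco n s (s + k + 1), X j) := by
      rw [hkey]; ring
    rw [htarget]
    refine sub_mem ?_ (ih (by omega))
    rw [← mulLeft_ell_mk]
    exact Submodule.mem_map_of_mem
      (sq_mem_piece _ (by rw [card_finIco (by omega)]; omega))

lemma image_le :
    Submodule.map (LinearMap.mulLeft K (vdwEll K n k)) (vdwPiece K n k k)
      ≤ vdwPiece K n k (k + 1) := by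
  rintro x ⟨y, ⟨p, hp, rfl⟩, rfl⟩
  refine ⟨(∑ j : Fin n, X j) * p, ?_, ?_⟩
  · have hp' : p.IsHomogeneous k := hp
    show ((∑ j : Fin n, X j) * p).IsHomogeneous (k + 1)
    have hl : ((∑ j : Fin n, X j : MvPolynomial (Fin n) K)).IsHomogeneous 1 :=
      MvPolynomial.IsHomogeneous.sum _ _ _ (fun j _ => isHomogeneous_X K j)
    have := hl.mul hp'
    rwa [add_comm] at this
  · show Ideal.Quotient.mk (vdwIdeal K n k) _ = _
    rw [← mulLeft_ell_mk]
    rfl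

lemma piece_le (hk : 1 ≤ k) (hkn : k < n) (h2 : n ≤ 2 * k) :
    vdwPiece K n k (k + 1)
      ≤ Submodule.map (LinearMap.mulLeft K (vdwEll K n k)) (vdwPiece K n k k) := by
  rintro x ⟨p, hp, rfl⟩
  have hp' : p.IsHomogeneous (k + 1) := hp
  have hsum : (Ideal.Quotient.mkₐ K (vdwIdeal K n k)).toLinearMap p
      = ∑ d ∈ p.support, Ideal.Quotient.mk (vdwIdeal K n k) (monomial d (coeff d p)) := by
    conv_lhs => rw [p.as_sum]
    rw [map_sum]
    rfl
  rw [hsum]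
  refine Submodule.sum_mem _ (fun d hd => ?_)
  have hdeg : d.degree = k + 1 := by
    by_contra hne
    exact (mem_support_iff.1 hd) (hp'.coeff_eq_zero hne)
  by_cases hsq : ∃ j, 2 ≤ d j
  · obtain ⟨j, hj⟩ := hsq
    have hle : Finsupp.single j 2 ≤ d := Finsupp.single_le_iff.2 hj
    have hmem : (monomial d (coeff d p) : MvPolynomial (Fin n) K) ∈ vdwIdeal K n k := by
      have heq : (monomial d (coeff d p) : MvPolynomial (Fin n) K)
          = X j ^ 2 * monomial (d - Finsupp.single j 2) (coeff d p) := by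
        rw [X_pow_eq_monomial, monomial_mul, one_mul, add_tsub_cancel_of_le hle]
      rw [heq]
      exact Ideal.mul_mem_right _ _ (Ideal.subset_span (Or.inr ⟨j, rfl⟩))
    rw [Ideal.Quotient.eq_zero_iff_mem.2 hmem]
    exact Submodule.zero_mem _
  · push_neg at hsq
    have hone : ∀ j ∈ d.support, d j = 1 := fun j hj => by
      have h1 := hsq j
      have h2 := Finsupp.mem_support_iff.1 hj
      omega
    have hmono : (monomial d (1 : K) : MvPolynomial (Fin n) K) = ∏ j ∈ d.support, X j := by
      rw [monomial_eq, map_one, one_mul, Finsupp.prod]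
      exact Finset.prod_congr rfl (fun j hj => by rw [hone j hj, pow_one])
    have hrepr : (monomial d (coeff d p) : MvPolynomial (Fin n) K)
        = coeff d p • ∏ j ∈ d.support, X j := by
      rw [smul_eq_C_mul, ← hmono, C_mul_monomial, mul_one]
    have hcard : d.support.card = k + 1 := by
      have : d.degree = d.support.card := by
        rw [show d.degree = ∑ j ∈ d.support, d j from rfl]
        rw [Finset.sum_congr rfl hone]
        simp
      omega
    have hsmul : Ideal.Quotient.mk (vdwIdeal K n k) (monomial d (coeff d p))
        = coeff d p • Ideal.Quotient.mk (vdwIdeal K n k) (∏ j ∈ d.support, X j) := by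
      rw [hrepr]
      exact map_smul (Ideal.Quotient.mkₐ K (vdwIdeal K n k)) _ _
    rw [hsmul]
    refine Submodule.smul_mem _ _ ?_
    by_cases hface : vdwFace n k (d.support.image (fun j : Fin n => (j : ℕ) + 1))
    · have hcardimg : (d.support.image (fun j : Fin n => (j : ℕ) + 1)).card = k + 1 := by
        rw [Finset.card_image_of_injective _ (vmap_inj (n := n)), hcard]
      obtain ⟨i, h1, hle, heq⟩ := vdw_face_card_interval hk h2 hface hcardimg
      have hSeq : d.support = finIco n (i - 1) ((i - 1) + k + 1) := by
        apply Finset.image_injective (vmap_inj (n := n))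
        rw [heq, image_finIco (by omega)]
        congr 1 <;> omega
      rw [hSeq]
      exact mem_image_aux hk h2 (i - 1) (by omega)
    · have hmem : (∏ j ∈ d.support, X j : MvPolynomial (Fin n) K) ∈ vdwIdeal K n k :=
        Ideal.subset_span (Or.inl ⟨d.support, Finset.card_pos.1 (by omega), hface, rfl⟩)
      rw [Ideal.Quotient.eq_zero_iff_mem.2 hmem]
      exact Submodule.zero_mem _

lemma piece_findim (i : ℕ) : FiniteDimensional K ↥(vdwPiece K n k i) := by
  have h1 : homogeneousSubmodule (Fin n) K i ≤ restrictTotalDegree (Fin n) K i := by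
    intro p hp
    rw [mem_restrictTotalDegree]
    exact (MvPolynomial.IsHomogeneous.totalDegree_le hp)
  haveI : FiniteDimensional K ↥(homogeneousSubmodule (Fin n) K i) :=
    Submodule.finiteDimensional_of_le h1
  exact Module.Finite.map _ _

end Alg

/-- Let `K` be an infinite field and `n > k ≥ 3` with
`n/2 ≤ k < n`.  Then `A(vdw(n,k))` has the WLP in degree `k`: for
`ℓ = x_1 + ⋯ + x_n`, the map `×ℓ : A_k → A_{k+1}` has maximal rank. -/
theorem vdw_wlp_degree_k (K : Type*) [Field K] [Infinite K]
    (n k : ℕ) (hk : 3 ≤ k) (hkn : k < n) (h2 : n ≤ 2 * k) :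
    vdwMaxRank K n k (vdwEll K n k) k (k + 1) := by
  have hk1 : 1 ≤ k := by omega
  have heq : Submodule.map (LinearMap.mulLeft K (vdwEll K n k)) (vdwPiece K n k k)
      = vdwPiece K n k (k + 1) := le_antisymm image_le (piece_le hk1 hkn h2)
  haveI := piece_findim (K := K) (n := n) (k := k) k
  have hle := Submodule.finrank_map_le (LinearMap.mulLeft K (vdwEll K n k)) (vdwPiece K n k k)
  rw [heq] at hle
  show Module.finrank K _ = _
  rw [heq]
  exact (min_eq_right hle).symm
end

section
/- For a positive integer m write m = 2^{ν₂(m)}·t with t odd, where ν₂ is the 2-adic valuation, and define v(m) = (−1)^{ν₂(m)+1}·2^{ν₂(m)}. Then for every positive integer j and every triple of integers 0 ≤ s < t < u ≤ 3, one has v((t−s)j) + v((u−t)j) + v((u−s)j) = 0. In particular, if {a, b, c} with a < b < c is any 3-element subset of a 4-term arithmetic progression {i, i+j, i+2j, i+3j}, then v(b−a) + v(c−b) + v(c−a) = 0. -/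
open MvPolynomial

lemma vval_two_mul (j : ℕ) (hj : 1 ≤ j) : vval (2 * j) = -2 * vval j := by
  unfold vval
  rw [padicValNat.mul (by norm_num) (by omega), padicValNat.self (by norm_num)]
  ring

lemma vval_three_mul (j : ℕ) (hj : 1 ≤ j) : vval (3 * j) = vval j := by
  unfold vval
  rw [padicValNat.mul (by norm_num) (by omega)]
  rw [padicValNat.eq_zero_of_not_dvd (by norm_num)]
  ring

lemma vval_part1 : ∀ j : ℕ, 1 ≤ j → ∀ s t u : ℕ, s < t → t < u → u ≤ 3 →
    vval ((t - s) * j) + vval ((u - t) * j) + vval ((u - s) * j) = 0 := by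
  intro j hj s t u hst htu hu
  interval_cases u <;> interval_cases t <;> interval_cases s <;>
    norm_num [vval_two_mul j hj, vval_three_mul j hj] <;> ring

/-- With `v(m) = (−1)^{ν₂(m)+1}·2^{ν₂(m)}`: for every `j ≥ 1` and
all `0 ≤ s < t < u ≤ 3` one has `v((t−s)j) + v((u−t)j) + v((u−s)j) = 0`; in
particular for any 3-element subset `{a,b,c}` (with `a < b < c`) of a 4-term
arithmetic progression `{i, i+j, i+2j, i+3j}`, `v(b−a) + v(c−b) + v(c−a) = 0`. -/
theorem vval_sum_eq_zero :
    (∀ j : ℕ, 1 ≤ j → ∀ s t u : ℕ, s < t → t < u → u ≤ 3 →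
      vval ((t - s) * j) + vval ((u - t) * j) + vval ((u - s) * j) = 0) ∧
    (∀ i j : ℕ, 1 ≤ j → ∀ a b c : ℕ, a < b → b < c →
      ({a, b, c} : Finset ℕ) ⊆ ({i, i + j, i + 2 * j, i + 3 * j} : Finset ℕ) →
      vval (b - a) + vval (c - b) + vval (c - a) = 0) := by
  constructor
  · exact vval_part1
  · intro i j hj a b c hab hbc hsub
    have key : ∀ x ∈ ({a, b, c} : Finset ℕ), ∃ e, e ≤ 3 ∧ x = i + e * j := by
      intro x hx
      have := hsub hx
      simp only [Finset.mem_insert, Finset.mem_singleton] at this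
      rcases this with h | h | h | h
      · exact ⟨0, by omega, by omega⟩
      · exact ⟨1, by omega, by omega⟩
      · exact ⟨2, by omega, by omega⟩
      · exact ⟨3, by omega, by omega⟩
    obtain ⟨ea, hea, ha⟩ := key a (by simp)
    obtain ⟨eb, heb, hb⟩ := key b (by simp)
    obtain ⟨ec, hec, hc⟩ := key c (by simp)
    have h1 : ea < eb := by
      by_contra h
      push_neg at h
      have : eb * j ≤ ea * j := Nat.mul_le_mul_right j h
      omega
    have h2 : eb < ec := by
      by_contra h
      push_neg at h
      have : ec * j ≤ eb * j := Nat.mul_le_mul_right j h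
      omega
    have e1 : b - a = (eb - ea) * j := by
      rw [Nat.sub_mul]; omega
    have e2 : c - b = (ec - eb) * j := by
      rw [Nat.sub_mul]; omega
    have e3 : c - a = (ec - ea) * j := by
      rw [Nat.sub_mul]; omega
    rw [e1, e2, e3]
    exact vval_part1 j hj ea eb ec h1 h2 hec
end
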